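/- arXiv:2006.04318 — 13 statements merged into one kernel-verified Lean document; each statement's English description precedes it below -/
import Mathlib

section
/- For every n ≥ 1, the number of inversion sequences e of length n avoiding the pattern 0012 whose last entry satisfies e_n = n−1 equals 1 if n = 1, and equals 2^{n−2} if n ≥ 2. -/
/-- `e : Fin n → ℕ` is an inversion sequence: `e i ≤ i` (0-indexed). -/
def IsInvSeq {n : ℕ} (e : Fin n → ℕ) : Prop := ∀ i : Fin n, e i ≤ (i : ℕ)

/-- `e` avoids the pattern 0012: there are no indices `i < j < k < l`
with `e i = e j < e k < e l`. -/
def Avoids0012 {n : ℕ} (e : Fin n → ℕ) : Prop :=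
  ¬ ∃ i j k l : Fin n, i < j ∧ j < k ∧ k < l ∧ e i = e j ∧ e j < e k ∧ e k < e l

/-- The set `I_n(0012)` of inversion sequences of length `n` avoiding `0012`. -/
def InvSeq0012 (n : ℕ) : Set (Fin n → ℕ) := {e | IsInvSeq e ∧ Avoids0012 e}

/-- `R(e)`: the set of values appearing more than once in `e`. -/
def repeats {n : ℕ} (e : Fin n → ℕ) : Set ℕ :=
  {m | ∃ i j : Fin n, i ≠ j ∧ e i = m ∧ e j = m}

open Classical in
/-- `srpt e = min R(e)` if `R(e) ≠ ∅`, and `n - 1` otherwise. -/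
noncomputable def srpt {n : ℕ} (e : Fin n → ℕ) : ℕ :=
  if (repeats e).Nonempty then sInf (repeats e) else n - 1

/-- The last entry of `e` (and `0` for the empty sequence). -/
def lastEntry {n : ℕ} (e : Fin n → ℕ) : ℕ :=
  if h : 0 < n then e ⟨n - 1, by omega⟩ else 0

/-- `γ(e)`: the sequence `e` with its last entry removed. -/
def gammaSeq {n : ℕ} (e : Fin n → ℕ) : Fin (n - 1) → ℕ :=
  fun i => e (Fin.castLE (Nat.sub_le n 1) i)

/-- `f n k ℓ`: the number of `e ∈ I_n(0012)` with `srpt e = k` and `last e = ℓ`. -/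
noncomputable def f (n k ℓ : ℕ) : ℕ :=
  Set.ncard {e : Fin n → ℕ | e ∈ InvSeq0012 n ∧ srpt e = k ∧ lastEntry e = ℓ}

def Avoids001 {m : ℕ} (e : Fin m → ℕ) : Prop :=
  ¬ ∃ i j k : Fin m, i < j ∧ j < k ∧ e i = e j ∧ e j < e k

def Tset (m : ℕ) : Set (Fin m → ℕ) := {e | (∀ i : Fin m, e i ≤ (i : ℕ)) ∧ Avoids001 e}

lemma lemA1 {m : ℕ} (e : Fin m → ℕ) (hinv : ∀ i : Fin m, e i ≤ (i : ℕ))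
    (hav : Avoids001 e) :
    ∀ N : ℕ, ∀ i : Fin m, (i : ℕ) ≤ N → ∀ h2 : e i < (i : ℕ),
      e ⟨e i, h2.trans i.isLt⟩ = e i := by
  intro N
  induction N with
  | zero => intro i hi h2; omega
  | succ N ih =>
    intro i hi h2
    set p : Fin m := ⟨e i, h2.trans i.isLt⟩ with hp
    by_contra hne
    have hple : e p ≤ e i := hinv p
    have hplt : e p < (p : ℕ) := lt_of_le_of_ne hple hne
    have hpN : (p : ℕ) ≤ N := by
      have : (p : ℕ) < (i : ℕ) := h2
      omega
    have hq := ih p hpN hplt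
    set q : Fin m := ⟨e p, hplt.trans p.isLt⟩ with hq'
    exact hav ⟨q, p, i, hplt, h2, hq, hplt⟩

lemma lemA {m : ℕ} (e : Fin m → ℕ) (hinv : ∀ i : Fin m, e i ≤ (i : ℕ))
    (hav : Avoids001 e) (i k : Fin m) (hik : i < k) (hi : e i < (i : ℕ)) :
    e k ≤ e i := by
  by_contra hgt
  push_neg at hgt
  have ha := lemA1 e hinv hav (i : ℕ) i le_rfl hi
  exact hav ⟨⟨e i, hi.trans i.isLt⟩, i, k, by simp [Fin.lt_def]; omega, hik, ha, hgt⟩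

/-- Sequences that are the identity below `t` and a `<t`-bounded antitone tail from `t` on. -/
def PieceSet (m t : ℕ) : Set (Fin m → ℕ) :=
  {e | (∀ i : Fin m, (i : ℕ) < t → e i = i) ∧ (∀ i : Fin m, t ≤ (i : ℕ) → e i < t) ∧
       (∀ i k : Fin m, t ≤ (i : ℕ) → i ≤ k → e k ≤ e i)}

/-- Bounded antitone sequences. -/
def Dset (s t : ℕ) : Set (Fin s → ℕ) :=
  {d | (∀ j : Fin s, d j < t) ∧ (∀ j k : Fin s, j ≤ k → d k ≤ d j)}

lemma finite_of_bdd {s : ℕ} (S : Set (Fin s → ℕ)) (t : ℕ)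
    (h : ∀ e ∈ S, ∀ j, e j < t) : S.Finite := by
  have hpi : (Set.pi Set.univ (fun _ : Fin s => Set.Iio t)).Finite :=
    Set.Finite.pi (fun _ => Set.finite_Iio t)
  exact hpi.subset (fun e he j _ => h e he j)

lemma finite_D (s t : ℕ) : (Dset s t).Finite :=
  finite_of_bdd _ t (fun e he j => he.1 j)

lemma finite_Piece (m t : ℕ) : (PieceSet m t).Finite := by
  refine finite_of_bdd _ (m + t) (fun e he j => ?_)
  rcases lt_or_ge (j : ℕ) t with h | h
  · rw [he.1 j h]; have := j.isLt; omega
  · have := he.2.1 j h; omega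

/-- The length of the initial identity segment. -/
noncomputable def tOf {m : ℕ} (e : Fin m → ℕ) : ℕ :=
  sInf {i : ℕ | ∀ h : i < m, e ⟨i, h⟩ ≠ i}

lemma tOf_spec {m : ℕ} (e : Fin m → ℕ) :
    tOf e ∈ {i : ℕ | ∀ h : i < m, e ⟨i, h⟩ ≠ i} ∧ tOf e ≤ m := by
  have hm : m ∈ {i : ℕ | ∀ h : i < m, e ⟨i, h⟩ ≠ i} := fun h => absurd h (lt_irrefl m)
  exact ⟨Nat.sInf_mem ⟨m, hm⟩, Nat.sInf_le hm⟩

lemma tOf_fix {m : ℕ} (e : Fin m → ℕ) {i : ℕ} (hi : i < tOf e) (h : i < m) :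
    e ⟨i, h⟩ = i := by
  have := Nat.notMem_of_lt_sInf hi
  simp only [Set.mem_setOf_eq, not_forall, not_ne_iff] at this
  obtain ⟨_, hh⟩ := this
  exact hh

lemma tOf_pos {m : ℕ} (e : Fin m → ℕ) (hm : 0 < m) (hinv : ∀ i : Fin m, e i ≤ (i : ℕ)) :
    0 < tOf e := by
  rcases Nat.eq_zero_or_pos (tOf e) with h0 | h; swap
  · exact h
  · exfalso
    have := (tOf_spec e).1
    rw [h0] at this
    exact this hm (Nat.le_zero.mp (hinv ⟨0, hm⟩))

lemma mem_piece_of_T {m : ℕ} (e : Fin m → ℕ) (he : e ∈ Tset m) (hm : 0 < m) :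
    e ∈ PieceSet m (tOf e) := by
  obtain ⟨hinv, hav⟩ := he
  obtain ⟨hmem, hle⟩ := tOf_spec e
  refine ⟨fun i hi => tOf_fix e hi i.isLt, ?_, ?_⟩
  · -- all entries from tOf e on are < tOf e
    intro i hi
    have htm : tOf e < m := lt_of_le_of_lt hi i.isLt
    have het : e ⟨tOf e, htm⟩ < tOf e :=
      lt_of_le_of_ne (hinv ⟨tOf e, htm⟩) (hmem htm)
    rcases eq_or_lt_of_le hi with heq | hlt
    · have : i = ⟨tOf e, htm⟩ := Fin.ext heq.symm
      rw [this]; exact het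
    · exact lt_of_le_of_lt (lemA e hinv hav ⟨tOf e, htm⟩ i hlt het) het
  · intro i k hi hik
    rcases eq_or_lt_of_le hik with heq | hlt
    · rw [heq]
    · have htm : tOf e < m := lt_of_le_of_lt hi i.isLt
      have het : e ⟨tOf e, htm⟩ < tOf e :=
        lt_of_le_of_ne (hinv ⟨tOf e, htm⟩) (hmem htm)
      have hei : e i < tOf e := by
        rcases eq_or_lt_of_le hi with heq2 | hlt2
        · have : i = ⟨tOf e, htm⟩ := Fin.ext heq2.symm
          rw [this]; exact het
        · exact lt_of_le_of_lt (lemA e hinv hav ⟨tOf e, htm⟩ i hlt2 het) het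
      exact lemA e hinv hav i k hlt (lt_of_lt_of_le hei hi)

lemma mem_T_of_piece {m t : ℕ} (e : Fin m → ℕ) (ht : 1 ≤ t) (he : e ∈ PieceSet m t) :
    e ∈ Tset m := by
  obtain ⟨hpre, hbd, hanti⟩ := he
  constructor
  · intro i
    rcases lt_or_ge (i : ℕ) t with h | h
    · rw [hpre i h]
    · exact le_of_lt (lt_of_lt_of_le (hbd i h) h)
  · rintro ⟨i, j, k, hij, hjk, heq, hlt⟩
    rcases lt_or_ge (j : ℕ) t with h | h
    · have hj : e j = (j : ℕ) := hpre j h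
      have hi : e i = (i : ℕ) := hpre i (lt_trans hij h)
      omega
    · exact absurd (hanti j k h (le_of_lt hjk)) (not_le.mpr hlt)

lemma tOf_of_piece {m : ℕ} (e : Fin m → ℕ) {t : ℕ} (ht1 : 1 ≤ t) (htm : t ≤ m)
    (he : e ∈ PieceSet m t) : tOf e = t := by
  obtain ⟨hpre, hbd, hanti⟩ := he
  have hmem : t ∈ {i : ℕ | ∀ h : i < m, e ⟨i, h⟩ ≠ i} := by
    intro h
    have := hbd ⟨t, h⟩ le_rfl
    omega
  apply le_antisymm (Nat.sInf_le hmem)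
  by_contra hlt
  push_neg at hlt
  obtain ⟨hmem2, hle2⟩ := tOf_spec e
  have hltm : tOf e < m := lt_of_lt_of_le hlt htm
  exact hmem2 hltm (hpre ⟨tOf e, hltm⟩ hlt)

lemma sigma_piece_ext {m : ℕ} {a b : Fin m} {x : ↥(PieceSet m ((a : ℕ) + 1))}
    {y : ↥(PieceSet m ((b : ℕ) + 1))} (h : a = b) (hv : x.1 = y.1) :
    (⟨a, x⟩ : Σ t : Fin m, ↥(PieceSet m ((t : ℕ) + 1))) = ⟨b, y⟩ := by
  subst h; exact congrArg _ (Subtype.ext hv)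

noncomputable def tEquiv (m : ℕ) (hm : 0 < m) :
    ↥(Tset m) ≃ Σ t : Fin m, ↥(PieceSet m ((t : ℕ) + 1)) where
  toFun e := ⟨⟨tOf e.1 - 1, by
      have := (tOf_spec e.1).2; have := tOf_pos e.1 hm e.2.1; omega⟩, ⟨e.1, by
      have h1 : tOf e.1 - 1 + 1 = tOf e.1 := by
        have := tOf_pos e.1 hm e.2.1; omega
      simpa [h1] using mem_piece_of_T e.1 e.2 hm⟩⟩
  invFun x := ⟨x.2.1, mem_T_of_piece x.2.1 (by omega) x.2.2⟩
  left_inv e := Subtype.ext rfl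
  right_inv x := by
    obtain ⟨t, d, hd⟩ := x
    have htof : tOf d = (t : ℕ) + 1 :=
      tOf_of_piece d (by omega) (by have := t.isLt; omega) hd
    exact sigma_piece_ext (Fin.ext (by simp; omega)) rfl

def pieceEquiv (m t : ℕ) (ht1 : 1 ≤ t) (htm : t ≤ m) :
    ↥(PieceSet m t) ≃ ↥(Dset (m - t) t) where
  toFun e := ⟨fun j => e.1 ⟨t + (j : ℕ), by have := j.isLt; omega⟩, by
    obtain ⟨hpre, hbd, hanti⟩ := e.2
    refine ⟨fun j => hbd _ (by simp), fun j k hjk => hanti _ _ (by simp) ?_⟩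
    simp only [Fin.le_def] at hjk ⊢
    omega⟩
  invFun d := ⟨fun i => if h : (i : ℕ) < t then (i : ℕ) else d.1 ⟨(i : ℕ) - t, by
      have := i.isLt; omega⟩, by
    obtain ⟨hbd, hanti⟩ := d.2
    refine ⟨fun i hi => by simp [hi], fun i hi => ?_, fun i k hi hik => ?_⟩
    · beta_reduce; rw [dif_neg (by omega)]; exact hbd _
    · beta_reduce
      rw [dif_neg (by simp only [Fin.le_def] at hik; omega : ¬ ((k : ℕ) < t)),
        dif_neg (by omega : ¬ ((i : ℕ) < t))]
      exact hanti _ _ (by simp only [Fin.le_def]; simp only [Fin.le_def] at hik; omega)⟩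
  left_inv e := by
    apply Subtype.ext
    funext i
    obtain ⟨hpre, hbd, hanti⟩ := e.2
    by_cases h : (i : ℕ) < t
    · simp only [dif_pos h]
      exact (hpre i h).symm
    · simp only [dif_neg h]
      have hidx : (⟨t + ((i : ℕ) - t), by have := i.isLt; omega⟩ : Fin m) = i :=
        Fin.ext (by simp; omega)
      rw [hidx]
  right_inv d := by
    apply Subtype.ext
    funext j
    have hj := j.isLt
    dsimp only
    rw [dif_neg (by simp : ¬ (((⟨t + (j : ℕ), by omega⟩ : Fin m) : ℕ) < t))]
    have hidx : (⟨((⟨t + (j : ℕ), by omega⟩ : Fin m) : ℕ) - t, by simp⟩ : Fin (m - t)) = j :=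
      Fin.ext (by simp)
    rw [hidx]

noncomputable def dSplitEquiv (s t : ℕ) :
    ↥(Dset (s + 1) (t + 1)) ≃ ↥(Dset (s + 1) t) ⊕ ↥(Dset s (t + 1)) where
  toFun d :=
    if h : d.1 0 < t then
      Sum.inl ⟨d.1, ⟨fun j => lt_of_le_of_lt (d.2.2 0 j (Fin.zero_le j)) h, d.2.2⟩⟩
    else
      Sum.inr ⟨fun j => d.1 ⟨(j : ℕ) + 1, by have := j.isLt; omega⟩, by
        refine ⟨fun j => d.2.1 _, fun j k hjk => d.2.2 _ _ ?_⟩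
        simp only [Fin.le_def] at hjk ⊢
        omega⟩
  invFun x :=
    match x with
    | Sum.inl d => ⟨d.1, ⟨fun j => Nat.lt_succ_of_lt (d.2.1 j), d.2.2⟩⟩
    | Sum.inr d => ⟨fun i => if h : (i : ℕ) = 0 then t else d.1 ⟨(i : ℕ) - 1, by
        have := i.isLt; omega⟩, by
      constructor
      · intro i
        beta_reduce
        by_cases h : (i : ℕ) = 0
        · rw [dif_pos h]; omega
        · rw [dif_neg h]; exact d.2.1 _
      · intro i k hik
        have hik' : (i : ℕ) ≤ (k : ℕ) := hik
        beta_reduce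
        by_cases hi : (i : ℕ) = 0
        · rw [dif_pos hi]
          by_cases hk : (k : ℕ) = 0
          · rw [dif_pos hk]
          · rw [dif_neg hk]
            have := d.2.1 ⟨(k : ℕ) - 1, by have := k.isLt; omega⟩
            omega
        · rw [dif_neg hi, dif_neg (by omega : ¬ (k : ℕ) = 0)]
          exact d.2.2 _ _ (by simp only [Fin.le_def]; omega)⟩
  left_inv d := by
    by_cases h : d.1 0 < t
    · simp only [dif_pos h]
    · simp only [dif_neg h]
      apply Subtype.ext
      funext i
      dsimp only
      by_cases hi : (i : ℕ) = 0
      · rw [dif_pos hi]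
        have h0 : d.1 0 < t + 1 := d.2.1 0
        have : i = 0 := Fin.ext hi
        rw [this]
        omega
      · rw [dif_neg hi]
        have hidx : (⟨(i : ℕ) - 1 + 1, by have := i.isLt; omega⟩ : Fin (s + 1)) = i :=
          Fin.ext (by simp; omega)
        rw [hidx]
  right_inv x := by
    match x with
    | Sum.inl d =>
      have h0 : d.1 0 < t := d.2.1 0
      simp only [dif_pos h0]
    | Sum.inr d =>
      have h0 : ¬ ((if h : ((0 : Fin (s + 1)) : ℕ) = 0 then t
          else d.1 ⟨((0 : Fin (s + 1)) : ℕ) - 1, by omega⟩) < t) := by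
        rw [dif_pos (by simp : ((0 : Fin (s + 1)) : ℕ) = 0)]
        omega
      simp only [dif_neg h0]
      refine congrArg Sum.inr (Subtype.ext (funext fun j => ?_))
      dsimp only
      rw [dif_neg (by omega : ¬ ((j : ℕ) + 1 = 0))]
      exact congrArg d.1 (Fin.ext (by simp))

lemma card_D_zero (t : ℕ) : Nat.card ↥(Dset 0 t) = 1 := by
  have : Nonempty ↥(Dset 0 t) := ⟨⟨fun j => j.elim0, fun j => j.elim0, fun j => j.elim0⟩⟩
  have : Subsingleton ↥(Dset 0 t) :=
    ⟨fun a b => Subtype.ext (funext fun j => j.elim0)⟩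
  exact Nat.card_unique

lemma card_D_of_t_zero (s : ℕ) : Nat.card ↥(Dset (s + 1) 0) = 0 := by
  have : IsEmpty ↥(Dset (s + 1) 0) := ⟨fun d => absurd (d.2.1 0) (by omega)⟩
  exact Nat.card_of_isEmpty

lemma card_D (s t : ℕ) : Nat.card ↥(Dset s t) = (s + t - 1).choose s := by
  induction s generalizing t with
  | zero => simpa using card_D_zero t
  | succ s ihs =>
    induction t with
    | zero =>
      rw [card_D_of_t_zero]
      have : s + 1 + 0 - 1 = s := by omega
      rw [this]
      exact (Nat.choose_eq_zero_of_lt (by omega)).symm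
    | succ t iht =>
      haveI : Finite ↥(Dset (s + 1) t) := (finite_D _ _).to_subtype
      haveI : Finite ↥(Dset s (t + 1)) := (finite_D _ _).to_subtype
      rw [Nat.card_congr (dSplitEquiv s t), Nat.card_sum, iht, ihs (t + 1)]
      have e1 : (s + 1 + t - 1).choose (s + 1) = (s + t).choose (s + 1) :=
        congrArg (fun x => Nat.choose x (s + 1)) (by omega)
      have e2 : (s + (t + 1) - 1).choose s = (s + t).choose s :=
        congrArg (fun x => Nat.choose x s) (by omega)
      have e3 : (s + 1 + (t + 1) - 1).choose (s + 1) = (s + t + 1).choose (s + 1) :=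
        congrArg (fun x => Nat.choose x (s + 1)) (by omega)
      rw [e1, e2, e3, Nat.choose_succ_succ (s + t) s]
      simp only [Nat.succ_eq_add_one]
      omega

lemma card_Piece (m t : ℕ) (ht1 : 1 ≤ t) (htm : t ≤ m) :
    Nat.card ↥(PieceSet m t) = (m - 1).choose (m - t) := by
  rw [Nat.card_congr (pieceEquiv m t ht1 htm), card_D]
  congr 1
  omega

lemma nat_card_sigma {ι : Type*} [Fintype ι] (π : ι → Type*) [∀ i, Finite (π i)] :
    Nat.card (Σ i, π i) = ∑ i, Nat.card (π i) := by
  letI : ∀ i, Fintype (π i) := fun i => Fintype.ofFinite _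
  simp [Nat.card_eq_fintype_card, Fintype.card_sigma]

lemma card_T (m : ℕ) (hm : 0 < m) : Nat.card ↥(Tset m) = 2 ^ (m - 1) := by
  haveI : ∀ t : Fin m, Finite ↥(PieceSet m ((t : ℕ) + 1)) :=
    fun t => (finite_Piece _ _).to_subtype
  rw [Nat.card_congr (tEquiv m hm), nat_card_sigma]
  have hval : ∀ t : Fin m, Nat.card ↥(PieceSet m ((t : ℕ) + 1)) = (m - 1).choose (t : ℕ) := by
    intro t
    rw [card_Piece m ((t : ℕ) + 1) (by omega) (by have := t.isLt; omega)]
    have h1 : m - ((t : ℕ) + 1) = (m - 1) - (t : ℕ) := by omega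
    rw [h1, Nat.choose_symm (by have := t.isLt; omega)]
  rw [Finset.sum_congr rfl (fun t _ => hval t)]
  rw [Fin.sum_univ_eq_sum_range (fun i => (m - 1).choose i) m]
  have : m = (m - 1) + 1 := by omega
  rw [this, Nat.succ_sub_one, Nat.sum_range_choose]

noncomputable def mainEquiv (n : ℕ) (hn : 1 ≤ n) :
    ↥{e : Fin n → ℕ | e ∈ InvSeq0012 n ∧ lastEntry e = n - 1} ≃ ↥(Tset (n - 1)) where
  toFun e := ⟨fun i => e.1 ⟨(i : ℕ), by have := i.isLt; omega⟩, by
    obtain ⟨⟨hinv, hav⟩, hlast⟩ := e.2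
    set L : Fin n := ⟨n - 1, by omega⟩ with hL
    have hlast' : e.1 L = n - 1 := by
      rw [lastEntry, dif_pos (by omega : 0 < n)] at hlast
      exact hlast
    constructor
    · intro i; exact hinv _
    · rintro ⟨i, j, k, hij, hjk, heq, hlt⟩
      have hk := k.isLt
      refine hav ⟨⟨(i : ℕ), by omega⟩, ⟨(j : ℕ), by omega⟩, ⟨(k : ℕ), by omega⟩,
        L, hij, hjk, by simp only [Fin.lt_def, hL]; omega, heq, hlt, ?_⟩
      have hbk : e.1 ⟨(k : ℕ), by omega⟩ ≤ (k : ℕ) := hinv _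
      omega⟩
  invFun d := ⟨fun i => if h : (i : ℕ) < n - 1 then d.1 ⟨(i : ℕ), h⟩ else n - 1, by
    obtain ⟨hinv, hav⟩ := d.2
    refine ⟨⟨fun i => ?_, ?_⟩, ?_⟩
    · beta_reduce
      by_cases h : (i : ℕ) < n - 1
      · rw [dif_pos h]; exact hinv _
      · rw [dif_neg h]; have := i.isLt; omega
    · rintro ⟨i, j, k, l, hij, hjk, hkl, heq, hlt1, hlt2⟩
      have hkn : (k : ℕ) < n - 1 := by
        have h1 : (k : ℕ) < (l : ℕ) := hkl
        have := l.isLt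
        omega
      have hjn : (j : ℕ) < n - 1 := lt_trans hjk hkn
      have hin : (i : ℕ) < n - 1 := lt_trans hij hjn
      simp only [dif_pos hin, dif_pos hjn] at heq
      simp only [dif_pos hjn, dif_pos hkn] at hlt1
      exact hav ⟨⟨(i : ℕ), hin⟩, ⟨(j : ℕ), hjn⟩, ⟨(k : ℕ), hkn⟩, hij, hjk, heq, hlt1⟩
    · rw [lastEntry, dif_pos (by omega : 0 < n)]
      beta_reduce
      rw [dif_neg (by simp : ¬ ((⟨n - 1, by omega⟩ : Fin n) : ℕ) < n - 1)]⟩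
  left_inv e := by
    apply Subtype.ext
    funext i
    dsimp only
    by_cases h : (i : ℕ) < n - 1
    · rw [dif_pos h]
    · rw [dif_neg h]
      obtain ⟨⟨hinv, hav⟩, hlast⟩ := e.2
      rw [lastEntry, dif_pos (by omega : 0 < n)] at hlast
      have : i = ⟨n - 1, by omega⟩ := Fin.ext (by simp; have := i.isLt; omega)
      rw [this, hlast]
  right_inv d := by
    apply Subtype.ext
    funext i
    dsimp only
    rw [dif_pos (by simpa using i.isLt : ((⟨(i : ℕ), by have := i.isLt; omega⟩ : Fin n) : ℕ) < n - 1)]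

/-- The number of `e ∈ I_n(0012)` with last entry `n - 1` is `1` if `n = 1`
and `2^(n-2)` if `n ≥ 2`. -/
theorem stmt1 (n : ℕ) (hn : 1 ≤ n) :
    {e : Fin n → ℕ | e ∈ InvSeq0012 n ∧ lastEntry e = n - 1}.ncard =
      if n = 1 then 1 else 2 ^ (n - 2) := by
  rw [← Nat.card_coe_set_eq, Nat.card_congr (mainEquiv n hn)]
  by_cases h1 : n = 1
  · subst h1
    simp only [if_pos]
    have : Nonempty ↥(Tset 0) := ⟨⟨fun i => i.elim0, ⟨fun i => i.elim0, by
      rintro ⟨i, _, _, _⟩; exact i.elim0⟩⟩⟩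
    have : Subsingleton ↥(Tset 0) := ⟨fun a b => Subtype.ext (funext fun i => i.elim0)⟩
    exact Nat.card_unique
  · rw [if_neg h1, card_T (n - 1) (by omega)]
    congr 1
end

section
/- Let n ≥ 1 and let e ∈ I_n(0012). If srpt(e) = k, then e_i = i − 1 for every 1 ≤ i ≤ k + 1. -/
/-- If `e ∈ I_n(0012)` and `srpt e = k`, then `e i = i` for all indices `i ≤ k`
(0-indexed version of `e_i = i - 1` for `1 ≤ i ≤ k + 1`). -/
theorem stmt2 (n : ℕ) (hn : 1 ≤ n) (e : Fin n → ℕ) (he : e ∈ InvSeq0012 n)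
    (k : ℕ) (hk : srpt e = k) :
    ∀ i : Fin n, (i : ℕ) ≤ k → e i = (i : ℕ) := by
  have main : ∀ m : ℕ, ∀ i : Fin n, (i : ℕ) = m → (i : ℕ) ≤ k → e i = (i : ℕ) := by
    intro m
    induction m using Nat.strong_induction_on with
    | _ m ih =>
      intro i him hik
      by_contra hne
      have hle := he.1 i
      have hlt : e i < (i : ℕ) := lt_of_le_of_ne hle hne
      have hjn : e i < n := lt_trans hlt i.isLt
      set j : Fin n := ⟨e i, hjn⟩ with hjdef
      have hj : e j = e i := ih (e i) (by omega) j rfl (by simp [hjdef]; omega)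
      have hmem : e i ∈ repeats e := ⟨j, i, by
        intro h; apply absurd (congrArg Fin.val h); simp [hjdef]; omega, hj, rfl⟩
      have hnonempty : (repeats e).Nonempty := ⟨_, hmem⟩
      have hinf : srpt e ≤ e i := by
        rw [srpt, if_pos hnonempty]; exact Nat.sInf_le hmem
      omega
  intro i hi
  exact main i i rfl hi
end

section
/- Let n ≥ 2 and let e = e_1 e_2 ⋯ e_n ∈ I_n(0012) with e ≠ 0 1 ⋯ (n−1), and let γ(e) = e_1 e_2 ⋯ e_{n−1}. If last(e) > srpt(γ(e)), then srpt(e) = srpt(γ(e)). -/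
/-!
Appending the entry `last e` to `γ e` can create only one new repeated value, `last e`
itself: `R(γ e) ⊆ R(e) ⊆ R(γ e) ∪ {last e}`. So if `R(γ e) ≠ ∅` and `last e > min R(γ e)`,
the minimum does not change. If `R(γ e) = ∅`, then `γ e` is an injective inversion
sequence, hence `0 1 ⋯ (n-2)`, and `n - 2 < last e ≤ n - 1` forces `e = 0 1 ⋯ (n-1)`.
-/

open Function

variable {n : ℕ}

theorem Nat.sInf_eq_of_subset_of_subset_insert {S T : Set ℕ} {x : ℕ} (hS : S.Nonempty)
    (hST : S ⊆ T) (hTS : T ⊆ insert x S) (hx : sInf S < x) : sInf T = sInf S := by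
  have hle : sInf T ≤ sInf S := Nat.sInf_le (hST (Nat.sInf_mem hS))
  refine le_antisymm hle ?_
  rcases hTS (Nat.sInf_mem (hS.mono hST)) with hT | hT
  · omega
  · exact Nat.sInf_le hT

theorem srpt_of_nonempty {e : Fin n → ℕ} (h : (repeats e).Nonempty) :
    srpt e = sInf (repeats e) := by
  simp [srpt, h]

theorem srpt_of_not_nonempty {e : Fin n → ℕ} (h : ¬ (repeats e).Nonempty) :
    srpt e = n - 1 := by
  simp [srpt, h]

theorem injective_of_not_nonempty_repeats {e : Fin n → ℕ} (h : ¬ (repeats e).Nonempty) :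
    Injective e := by
  intro i j hij
  by_contra hne
  exact h ⟨e i, i, j, hne, rfl, hij.symm⟩

theorem IsInvSeq.eq_self_of_injective {e : Fin n → ℕ} (he : IsInvSeq e) (hinj : Injective e)
    (i : Fin n) : e i = i := by
  induction i using WellFoundedLT.induction with
  | _ i IH =>
    by_contra hne
    have hlt : e i < i := lt_of_le_of_ne (he i) hne
    set j : Fin n := ⟨e i, hlt.trans i.isLt⟩
    have hj : e j = e i := IH j hlt
    exact hlt.ne (congrArg Fin.val (hinj hj))

theorem lastEntry_eq_apply (e : Fin n → ℕ) {i : Fin n} (hi : (i : ℕ) = n - 1) :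
    lastEntry e = e i := by
  rw [lastEntry, dif_pos (by omega)]
  exact congrArg e (Fin.ext hi.symm)

theorem IsInvSeq.lastEntry_le {e : Fin n → ℕ} (he : IsInvSeq e) : lastEntry e ≤ n - 1 := by
  unfold lastEntry
  split
  · exact he _
  · exact Nat.zero_le _

theorem isInvSeq_gammaSeq {e : Fin n → ℕ} (he : IsInvSeq e) : IsInvSeq (gammaSeq e) :=
  fun _ => he _

theorem Fin.exists_castLE_sub_one_eq_or_val_eq (i : Fin n) :
    (∃ i' : Fin (n - 1), Fin.castLE (Nat.sub_le n 1) i' = i) ∨ (i : ℕ) = n - 1 := by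
  rcases lt_or_ge (i : ℕ) (n - 1) with hi | hi
  · exact Or.inl ⟨⟨i, hi⟩, rfl⟩
  · exact Or.inr (by omega)

theorem eq_of_gammaSeq_eq_of_lastEntry_eq {e e' : Fin n → ℕ} (hγ : gammaSeq e = gammaSeq e')
    (hlast : lastEntry e = lastEntry e') : e = e' := by
  funext i
  rcases Fin.exists_castLE_sub_one_eq_or_val_eq i with ⟨i', rfl⟩ | hi
  · exact congrFun hγ i'
  · rw [← lastEntry_eq_apply e hi, ← lastEntry_eq_apply e' hi, hlast]

theorem repeats_gammaSeq_subset (e : Fin n → ℕ) : repeats (gammaSeq e) ⊆ repeats e := by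
  rintro m ⟨i, j, hij, hi, hj⟩
  exact ⟨_, _, (Fin.castLE_injective _).ne hij, hi, hj⟩

theorem repeats_subset_insert_lastEntry (e : Fin n → ℕ) :
    repeats e ⊆ insert (lastEntry e) (repeats (gammaSeq e)) := by
  rintro m ⟨i, j, hij, rfl, hj⟩
  rcases Fin.exists_castLE_sub_one_eq_or_val_eq i with ⟨i', rfl⟩ | hi
  · rcases Fin.exists_castLE_sub_one_eq_or_val_eq j with ⟨j', rfl⟩ | hj'
    · exact Or.inr ⟨i', j', fun h => hij (h ▸ rfl), rfl, hj⟩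
    · exact Or.inl (hj.symm.trans (lastEntry_eq_apply e hj').symm)
  · exact Or.inl (lastEntry_eq_apply e hi).symm

theorem repeats_gammaSeq_nonempty {e : Fin n → ℕ} (he : IsInvSeq e)
    (hne : e ≠ fun i : Fin n => (i : ℕ)) (h : srpt (gammaSeq e) < lastEntry e) :
    (repeats (gammaSeq e)).Nonempty := by
  by_contra hR
  have hγ : gammaSeq e = fun i : Fin (n - 1) => (i : ℕ) :=
    funext ((isInvSeq_gammaSeq he).eq_self_of_injective (injective_of_not_nonempty_repeats hR))
  have hlast : lastEntry e ≤ n - 1 := he.lastEntry_le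
  rw [srpt_of_not_nonempty hR] at h
  refine hne (eq_of_gammaSeq_eq_of_lastEntry_eq hγ ?_)
  rw [lastEntry_eq_apply (fun i : Fin n => (i : ℕ)) (i := ⟨n - 1, by omega⟩) rfl]
  dsimp only
  omega

theorem stmt3_general (n : ℕ) (e : Fin n → ℕ) (he : e ∈ InvSeq0012 n)
    (hne : e ≠ fun (i : Fin n) => (i : ℕ))
    (h : srpt (gammaSeq e) < lastEntry e) :
    srpt e = srpt (gammaSeq e) := by
  have hR : (repeats (gammaSeq e)).Nonempty := repeats_gammaSeq_nonempty he.1 hne h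
  have hsub := repeats_gammaSeq_subset e
  rw [srpt_of_nonempty hR] at h ⊢
  rw [srpt_of_nonempty (hR.mono hsub)]
  exact Nat.sInf_eq_of_subset_of_subset_insert hR hsub (repeats_subset_insert_lastEntry e) h

/-- For `n ≥ 2` and `e ∈ I_n(0012)` with `e ≠ 0 1 ⋯ (n-1)`:
if `last e > srpt (γ e)`, then `srpt e = srpt (γ e)`. -/
theorem stmt3 (n : ℕ) (hn : 2 ≤ n) (e : Fin n → ℕ) (he : e ∈ InvSeq0012 n)
    (hne : e ≠ fun (i : Fin n) => (i : ℕ))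
    (h : srpt (gammaSeq e) < lastEntry e) :
    srpt e = srpt (gammaSeq e) :=
  stmt3_general n e he hne h
end

section
/- Let n ≥ 2 and let e = e_1 e_2 ⋯ e_n ∈ I_n(0012) with e ≠ 0 1 ⋯ (n−1), and let γ(e) = e_1 e_2 ⋯ e_{n−1}. If last(e) ≤ srpt(γ(e)), then srpt(e) = last(e). -/
/-!
An inversion sequence whose first `k + 1` entries are pairwise distinct starts with `0 1 ⋯ k`:
at a first index `i` with `g i < i` the earlier entry at position `g i` already equals `g i`.
The first `srpt g + 1` entries are pairwise distinct, so every value `v ≤ srpt g` occurs in `g`.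
Applied to `γ(e)` with `v = last(e)`, this makes `last(e)` a repeated value of `e`; every other
repeated value of `e` is one of `γ(e)`, hence at least `srpt(γ(e)) ≥ last(e)`.
-/

theorem srpt_le_of_mem_repeats {m w : ℕ} {g : Fin m → ℕ} (hw : w ∈ repeats g) : srpt g ≤ w := by
  rw [srpt, if_pos ⟨w, hw⟩]
  exact Nat.sInf_le hw

theorem srpt_eq_of_isLeast {m k : ℕ} {g : Fin m → ℕ} (hk : IsLeast (repeats g) k) :
    srpt g = k := by
  rw [srpt, if_pos ⟨k, hk.1⟩]
  exact hk.csInf_eq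

theorem IsInvSeq.apply_eq_of_injOn {m k : ℕ} {g : Fin m → ℕ} (hg : IsInvSeq g)
    (hinj : Set.InjOn g {i | (i : ℕ) ≤ k}) {i : Fin m} (hi : (i : ℕ) ≤ k) : g i = i := by
  induction i using WellFoundedLT.induction with
  | _ i ih =>
    refine le_antisymm (hg i) (not_lt.1 fun hlt => ?_)
    let j : Fin m := ⟨g i, hlt.trans i.2⟩
    have hj : g j = g i := ih j hlt (hlt.le.trans hi)
    exact hlt.ne (congrArg Fin.val (hinj (hlt.le.trans hi) hi hj))

theorem IsInvSeq.injOn_le_srpt {m : ℕ} {g : Fin m → ℕ} (hg : IsInvSeq g) :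
    Set.InjOn g {i | (i : ℕ) ≤ srpt g} := by
  intro a (ha : (a : ℕ) ≤ srpt g) b (hb : (b : ℕ) ≤ srpt g) hab
  by_contra hne
  have hs : srpt g ≤ g a := srpt_le_of_mem_repeats ⟨a, b, hne, rfl, hab.symm⟩
  have := hg a
  have := hg b
  exact hne (Fin.ext (by omega))

theorem IsInvSeq.srpt_lt {m : ℕ} {g : Fin m → ℕ} (hg : IsInvSeq g) (hm : 0 < m) : srpt g < m := by
  by_cases hrep : (repeats g).Nonempty
  · obtain ⟨i, -, -, hi, -⟩ := Nat.sInf_mem hrep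
    rw [srpt, if_pos hrep, ← hi]
    exact (hg i).trans_lt i.2
  · rw [srpt, if_neg hrep]
    omega

theorem IsInvSeq.exists_apply_eq_of_le_srpt {m v : ℕ} {g : Fin m → ℕ} (hg : IsInvSeq g)
    (hm : 0 < m) (hv : v ≤ srpt g) : ∃ i, g i = v :=
  ⟨⟨v, hv.trans_lt (hg.srpt_lt hm)⟩, hg.apply_eq_of_injOn hg.injOn_le_srpt hv⟩

theorem mem_repeats_init {m w : ℕ} {e : Fin (m + 1) → ℕ} (hw : w ∈ repeats e)
    (hlast : w ≠ e (Fin.last m)) : w ∈ repeats (Fin.init e) := by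
  obtain ⟨i, j, hij, rfl, hj⟩ := hw
  obtain ⟨i, rfl⟩ := Fin.eq_castSucc_of_ne_last (x := i) (fun h => hlast (h ▸ rfl))
  obtain ⟨j, rfl⟩ := Fin.eq_castSucc_of_ne_last (x := j) (fun h => hlast (h ▸ hj.symm))
  exact ⟨i, j, fun h => hij (h ▸ rfl), rfl, hj⟩

theorem srpt_eq_last_of_le_srpt_init {m : ℕ} {e : Fin (m + 1) → ℕ} (he : IsInvSeq e)
    (hm : 0 < m) (h : e (Fin.last m) ≤ srpt (Fin.init e)) : srpt e = e (Fin.last m) := by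
  have hinit : IsInvSeq (Fin.init e) := fun i => he i.castSucc
  obtain ⟨i, hi⟩ := hinit.exists_apply_eq_of_le_srpt hm h
  refine srpt_eq_of_isLeast ⟨⟨i.castSucc, Fin.last m, Fin.castSucc_ne_last i, hi, rfl⟩, ?_⟩
  intro w hw
  by_contra hlt
  have hw' := srpt_le_of_mem_repeats (mem_repeats_init hw (by omega))
  omega

theorem stmt4_general (n : ℕ) (hn : 2 ≤ n) (e : Fin n → ℕ) (he : e ∈ InvSeq0012 n)
    (h : lastEntry e ≤ srpt (gammaSeq e)) :
    srpt e = lastEntry e := by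
  obtain ⟨m, rfl⟩ : ∃ m, n = m + 1 := ⟨n - 1, by omega⟩
  have hlast : lastEntry e = e (Fin.last m) := dif_pos m.succ_pos
  rw [hlast] at h ⊢
  exact srpt_eq_last_of_le_srpt_init he.1 (by omega) h

/-- For `n ≥ 2` and `e ∈ I_n(0012)` with `e ≠ 0 1 ⋯ (n-1)`:
if `last e ≤ srpt (γ e)`, then `srpt e = last e`. -/
theorem stmt4 (n : ℕ) (hn : 2 ≤ n) (e : Fin n → ℕ) (he : e ∈ InvSeq0012 n)
    (hne : e ≠ fun (i : Fin n) => (i : ℕ))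
    (h : lastEntry e ≤ srpt (gammaSeq e)) :
    srpt e = lastEntry e :=
  stmt4_general n hn e he h
end

section
/- For every n ≥ 1 and every e ∈ I_n(0012), one has 0 ≤ srpt(e) ≤ last(e) ≤ n − 1. -/
/-!
If no value `≤ ℓ` is repeated in an inversion sequence `e`, then `e` maps the first `ℓ + 1`
positions injectively, hence bijectively, onto `{0, …, ℓ}`; so the value `ℓ` already occurs at
a position `≤ ℓ`. Taking `ℓ = last(e) < srpt(e)`, that occurrence must be the last position
itself, forcing `last(e) = n - 1`, which is at least `srpt(e)`.
-/

lemma lastEntry_of_pos {n : ℕ} (e : Fin n → ℕ) (hn : 0 < n) :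
    lastEntry e = e ⟨n - 1, by omega⟩ := by
  simp [lastEntry, hn]

lemma srpt_le_of_mem_repeats_s5 {n m : ℕ} {e : Fin n → ℕ} (hm : m ∈ repeats e) : srpt e ≤ m := by
  rw [srpt, if_pos ⟨m, hm⟩]
  exact Nat.sInf_le hm

namespace IsInvSeq

variable {n : ℕ} {e : Fin n → ℕ}

lemma le_pred (he : IsInvSeq e) (i : Fin n) : e i ≤ n - 1 :=
  (he i).trans (by omega)

lemma lastEntry_le_s5 (he : IsInvSeq e) : lastEntry e ≤ n - 1 := by
  rcases Nat.eq_zero_or_pos n with rfl | hn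
  · simp [lastEntry]
  · rw [lastEntry_of_pos e hn]
    exact he.le_pred _

lemma srpt_le (he : IsInvSeq e) : srpt e ≤ n - 1 := by
  by_cases hrep : (repeats e).Nonempty
  · obtain ⟨m, hm⟩ := hrep
    obtain ⟨i, -, -, rfl, -⟩ := id hm
    exact (srpt_le_of_mem_repeats_s5 hm).trans (he.le_pred i)
  · rw [srpt, if_neg hrep]

lemma exists_le_eq_of_forall_lt_repeats (he : IsInvSeq e) {k : ℕ} (hk : k < n)
    (hrep : ∀ m ∈ repeats e, k < m) : ∃ i : Fin n, (i : ℕ) ≤ k ∧ e i = k := by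
  let ι : Fin (k + 1) → Fin n := Fin.castLE hk
  have hιe (t : Fin (k + 1)) : e (ι t) ≤ k := (he (ι t)).trans (Nat.lt_succ_iff.mp t.isLt)
  let g : Fin (k + 1) → Fin (k + 1) := fun t => ⟨e (ι t), Nat.lt_succ_of_le (hιe t)⟩
  have hg : Function.Injective g := by
    intro a b hab
    by_contra hne
    have hmem : e (ι a) ∈ repeats e :=
      ⟨ι a, ι b, (Fin.castLE_injective hk).ne hne, rfl, (Fin.mk.inj_iff.mp hab).symm⟩
    exact (hrep _ hmem).not_ge (hιe a)
  obtain ⟨t, ht⟩ := Finite.injective_iff_surjective.mp hg (Fin.last k)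
  exact ⟨ι t, Nat.lt_succ_iff.mp t.isLt, congrArg Fin.val ht⟩

lemma lastEntry_eq_of_forall_lt_repeats (he : IsInvSeq e) (hn : 0 < n)
    (hrep : ∀ m ∈ repeats e, lastEntry e < m) : lastEntry e = n - 1 := by
  obtain ⟨i, hi, hei⟩ := he.exists_le_eq_of_forall_lt_repeats
    (he.lastEntry_le_s5.trans_lt (by omega)) hrep
  have hi_last : i = ⟨n - 1, by omega⟩ := by
    by_contra hne
    rw [lastEntry_of_pos e hn] at hei hrep
    exact (hrep _ ⟨i, _, hne, hei, rfl⟩).false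
  have : n - 1 ≤ lastEntry e := by simpa [hi_last] using hi
  exact le_antisymm he.lastEntry_le_s5 this

end IsInvSeq

/-- For every `n ≥ 1` and `e ∈ I_n(0012)`, `0 ≤ srpt e ≤ last e ≤ n - 1`. -/
theorem stmt5 (n : ℕ) (hn : 1 ≤ n) (e : Fin n → ℕ) (he : e ∈ InvSeq0012 n) :
    srpt e ≤ lastEntry e ∧ lastEntry e ≤ n - 1 := by
  obtain ⟨hinv, -⟩ := he
  refine ⟨?_, hinv.lastEntry_le_s5⟩
  by_contra! hlt
  have hlast : lastEntry e = n - 1 := hinv.lastEntry_eq_of_forall_lt_repeats hn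
    fun m hm => hlt.trans_le (srpt_le_of_mem_repeats_s5 hm)
  have := hinv.srpt_le
  omega
end

section
/- Let n ≥ 2 and let e = e_1 e_2 ⋯ e_n ∈ I_n(0012) satisfy srpt(e) = last(e) = k with 0 ≤ k ≤ n − 2. Then (a) e_i = i − 1 for all 1 ≤ i ≤ k + 1, and (b) the sequence e' = e'_1 e'_2 ⋯ e'_{n−k} defined by e'_i = e_{k+i} − k for 1 ≤ i ≤ n − k belongs to I_{n−k}(0012) and satisfies srpt(e') = last(e') = 0. -/
set_option maxHeartbeats 1000000


/-- For `n ≥ 2` and `e ∈ I_n(0012)` with `srpt e = last e = k` and `k ≤ n - 2`: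
(a) `e i = i` for all `i ≤ k` (0-indexed), and
(b) `e' : Fin (n-k) → ℕ` defined by `e' i = e (k + i) - k` belongs to
`I_{n-k}(0012)` and satisfies `srpt e' = last e' = 0`. -/
theorem stmt6 (n k : ℕ) (hn : 2 ≤ n) (hk : k + 2 ≤ n)
    (e : Fin n → ℕ) (he : e ∈ InvSeq0012 n)
    (hs : srpt e = k) (hl : lastEntry e = k) :
    (∀ i : Fin n, (i : ℕ) ≤ k → e i = (i : ℕ)) ∧
    ((fun i : Fin (n - k) => e ⟨k + (i : ℕ), by have := i.isLt; omega⟩ - k)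
        ∈ InvSeq0012 (n - k) ∧
      srpt (fun i : Fin (n - k) =>
        e ⟨k + (i : ℕ), by have := i.isLt; omega⟩ - k) = 0 ∧
      lastEntry (fun i : Fin (n - k) =>
        e ⟨k + (i : ℕ), by have := i.isLt; omega⟩ - k) = 0) := by
  obtain ⟨hinv, havd⟩ := he
  -- repeats is nonempty
  have hne : (repeats e).Nonempty := by
    by_contra h
    rw [srpt, if_neg h] at hs
    omega
  have hinf : sInf (repeats e) = k := by rwa [srpt, if_pos hne] at hs
  have hlow : ∀ m ∈ repeats e, k ≤ m := fun m hm => hinf ▸ Nat.sInf_le hm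
  -- part (a), indexed by nat
  have ha : ∀ m : ℕ, ∀ hm : m ≤ k, e ⟨m, by omega⟩ = m := by
    intro m
    induction m using Nat.strong_induction_on with
    | _ m ih =>
      intro hm
      by_contra hne'
      have h1 : e ⟨m, by omega⟩ < m :=
        lt_of_le_of_ne (hinv ⟨m, by omega⟩) hne'
      set c := e ⟨m, by omega⟩ with hc
      have hcc : e ⟨c, by omega⟩ = c := ih c h1 (by omega)
      have hmem : c ∈ repeats e :=
        ⟨⟨c, by omega⟩, ⟨m, by omega⟩, by
          simp only [ne_eq, Fin.mk.injEq]; omega, hcc, rfl⟩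
      have := hlow c hmem
      omega
  have haf : ∀ i : Fin n, (i : ℕ) ≤ k → e i = (i : ℕ) := by
    intro i hi
    have := ha i hi
    convert this using 2
  -- values at indices ≥ k are ≥ k
  have hgek : ∀ j : Fin n, k ≤ (j : ℕ) → k ≤ e j := by
    intro j hj
    by_contra h
    push_neg at h
    have hej : e ⟨e j, by omega⟩ = e j := ha (e j) (by omega)
    have hmem : e j ∈ repeats e :=
      ⟨⟨e j, by omega⟩, j, by
        intro hEq
        have : e j = (j : ℕ) := congrArg Fin.val hEq
        omega, hej, rfl⟩
    have := hlow _ hmem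
    omega
  have hl' : e ⟨n - 1, by omega⟩ = k := by
    rw [lastEntry, dif_pos (by omega : 0 < n)] at hl
    exact hl
  refine ⟨haf, ?_, ?_, ?_⟩
  · constructor
    · intro i
      have := hinv ⟨k + (i : ℕ), by have := i.isLt; omega⟩
      simp only at this ⊢
      omega
    · rintro ⟨i, j, p, l, hij, hjp, hpl, h1, h2, h3⟩
      simp only at h1 h2 h3
      have ki : k + (i : ℕ) < n := by have := i.isLt; omega
      have kj : k + (j : ℕ) < n := by have := j.isLt; omega
      have kp : k + (p : ℕ) < n := by have := p.isLt; omega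
      have kl : k + (l : ℕ) < n := by have := l.isLt; omega
      have gj : k ≤ e ⟨k + (j : ℕ), kj⟩ := hgek _ (Nat.le_add_right k _)
      have gp : k ≤ e ⟨k + (p : ℕ), kp⟩ := hgek _ (Nat.le_add_right k _)
      have gl : k ≤ e ⟨k + (l : ℕ), kl⟩ := hgek _ (Nat.le_add_right k _)
      have h1' : e ⟨k + (i : ℕ), ki⟩ - k = e ⟨k + (j : ℕ), kj⟩ - k := h1
      have h2' : e ⟨k + (j : ℕ), kj⟩ - k < e ⟨k + (p : ℕ), kp⟩ - k := h2
      have h3' : e ⟨k + (p : ℕ), kp⟩ - k < e ⟨k + (l : ℕ), kl⟩ - k := h3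
      have gi : k ≤ e ⟨k + (i : ℕ), ki⟩ := hgek _ (Nat.le_add_right k _)
      have b1 : (⟨k + (i : ℕ), ki⟩ : Fin n) < ⟨k + (j : ℕ), kj⟩ :=
        Fin.mk_lt_mk.mpr (by have h := (Fin.lt_iff_val_lt_val).mp hij; omega)
      have b2 : (⟨k + (j : ℕ), kj⟩ : Fin n) < ⟨k + (p : ℕ), kp⟩ :=
        Fin.mk_lt_mk.mpr (by have h := (Fin.lt_iff_val_lt_val).mp hjp; omega)
      have b3 : (⟨k + (p : ℕ), kp⟩ : Fin n) < ⟨k + (l : ℕ), kl⟩ :=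
        Fin.mk_lt_mk.mpr (by have h := (Fin.lt_iff_val_lt_val).mp hpl; omega)
      have b4 : e ⟨k + (i : ℕ), ki⟩ = e ⟨k + (j : ℕ), kj⟩ := by omega
      have b5 : e ⟨k + (j : ℕ), kj⟩ < e ⟨k + (p : ℕ), kp⟩ := by omega
      have b6 : e ⟨k + (p : ℕ), kp⟩ < e ⟨k + (l : ℕ), kl⟩ := by omega
      exact havd ⟨_, _, _, _, b1, b2, b3, b4, b5, b6⟩
  · -- srpt e' = 0
    have hkmem : k ∈ repeats e := hinf ▸ Nat.sInf_mem hne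
    obtain ⟨i, j, hij, hei, hej⟩ := hkmem
    have hik : k ≤ (i : ℕ) := by
      by_contra h
      push_neg at h
      have := haf i (by omega)
      omega
    have hjk : k ≤ (j : ℕ) := by
      by_contra h
      push_neg at h
      have := haf j (by omega)
      omega
    have hmem0 : (0 : ℕ) ∈ repeats
        (fun i : Fin (n - k) => e ⟨k + (i : ℕ), by have := i.isLt; omega⟩ - k) := by
      refine ⟨⟨(i : ℕ) - k, by have := i.isLt; omega⟩,
        ⟨(j : ℕ) - k, by have := j.isLt; omega⟩, ?_, ?_, ?_⟩
      · simp only [ne_eq, Fin.mk.injEq]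
        intro hEq
        apply hij
        apply Fin.ext
        omega
      · simp only
        have : (⟨k + ((i : ℕ) - k), by have := i.isLt; omega⟩ : Fin n) = i :=
          Fin.ext (by simp; omega)
        rw [this, hei]
        omega
      · simp only
        have : (⟨k + ((j : ℕ) - k), by have := j.isLt; omega⟩ : Fin n) = j :=
          Fin.ext (by simp; omega)
        rw [this, hej]
        omega
    rw [srpt, if_pos ⟨0, hmem0⟩]
    exact Nat.le_zero.mp (Nat.sInf_le hmem0)
  · rw [lastEntry, dif_pos (by omega : 0 < n - k)]
    simp only
    have : (⟨k + (n - k - 1), by omega⟩ : Fin n) = ⟨n - 1, by omega⟩ :=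
      Fin.ext (by simp; omega)
    rw [this, hl']
    omega
end

section
/- For every n ≥ 2 and every ℓ with 0 ≤ ℓ ≤ n−2, f_n(ℓ, ℓ) = ∑_{ℓ'=ℓ}^{n−2} ∑_{k'=ℓ}^{ℓ'} f_{n−1}(k', ℓ'). -/
/-! ### Auxiliary lemmas -/

set_option maxHeartbeats 1000000

lemma srpt_le_of_mem {n : ℕ} {e : Fin n → ℕ} {w : ℕ} (h : w ∈ repeats e) :
    srpt e ≤ w := by
  rw [srpt, if_pos ⟨w, h⟩]
  exact Nat.sInf_le h

lemma srpt_mem {n : ℕ} {e : Fin n → ℕ} (h : (repeats e).Nonempty) :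
    srpt e ∈ repeats e := by
  rw [srpt, if_pos h]
  exact Nat.sInf_mem h

lemma srpt_of_empty {n : ℕ} {e : Fin n → ℕ} (h : ¬ (repeats e).Nonempty) :
    srpt e = n - 1 := by
  rw [srpt, if_neg h]

/-- Pigeonhole: an entry cannot be both below its index and below `srpt e`. -/
lemma val_le_or_srpt_le {n : ℕ} {e : Fin n → ℕ} (he : IsInvSeq e) (i : Fin n) :
    (i : ℕ) ≤ e i ∨ srpt e ≤ e i := by
  by_contra hc
  push_neg at hc
  obtain ⟨h1, h2⟩ := hc
  set v := e i with hv
  have hnot : (i : ℕ) ∉ Finset.range (v + 1) := by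
    simp only [Finset.mem_range]; omega
  have hcard : (Finset.range (v + 1)).card
      < (insert (i : ℕ) (Finset.range (v + 1))).card := by
    rw [Finset.card_insert_of_notMem hnot]; omega
  have hmaps : ∀ p ∈ insert (i : ℕ) (Finset.range (v + 1)),
      (fun p => if h : p < n then e ⟨p, h⟩ else 0) p ∈ Finset.range (v + 1) := by
    intro p hp
    simp only [Finset.mem_insert, Finset.mem_range] at hp ⊢
    rcases hp with rfl | hp
    · rw [dif_pos i.isLt]
      simp only [Fin.eta, ← hv]
      omega
    · have hpn : p < n := by have := i.isLt; omega
      rw [dif_pos hpn]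
      have := he ⟨p, hpn⟩
      simp only at this
      omega
  obtain ⟨x, hx, y, hy, hxy, hg⟩ :=
    Finset.exists_ne_map_eq_of_card_lt_of_maps_to hcard hmaps
  have hxn : x < n := by
    simp only [Finset.mem_insert, Finset.mem_range] at hx
    rcases hx with rfl | hx
    · exact i.isLt
    · have := i.isLt; omega
  have hyn : y < n := by
    simp only [Finset.mem_insert, Finset.mem_range] at hy
    rcases hy with rfl | hy
    · exact i.isLt
    · have := i.isLt; omega
  rw [dif_pos hxn, dif_pos hyn] at hg
  have hwle : e ⟨x, hxn⟩ ≤ v := by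
    have hthis : (if h : x < n then e ⟨x, h⟩ else 0) ∈ Finset.range (v + 1) :=
      hmaps x hx
    rw [dif_pos hxn, Finset.mem_range] at hthis
    omega
  have hmem : e ⟨x, hxn⟩ ∈ repeats e :=
    ⟨⟨x, hxn⟩, ⟨y, hyn⟩, by simp [Fin.ext_iff, hxy], rfl, hg.symm⟩
  have := srpt_le_of_mem hmem
  omega

lemma entry_eq_of_le_srpt {n : ℕ} {e : Fin n → ℕ} (he : IsInvSeq e) (i : Fin n)
    (h : (i : ℕ) ≤ srpt e) : e i = i := by
  have h1 := he i
  rcases val_le_or_srpt_le he i with h' | h' <;> omega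

lemma srpt_le_pred {n : ℕ} {e : Fin n → ℕ} (he : IsInvSeq e) : srpt e ≤ n - 1 := by
  by_cases h : (repeats e).Nonempty
  · obtain ⟨i, j, _, hi, _⟩ := srpt_mem h
    have := he i
    have := i.isLt
    omega
  · rw [srpt_of_empty h]

/-- The source set of the bijection. -/
def Aset (n ℓ : ℕ) : Set (Fin n → ℕ) :=
  {e | e ∈ InvSeq0012 n ∧ srpt e = ℓ ∧ lastEntry e = ℓ}

/-- The target set of the bijection. -/
def Bset (m ℓ : ℕ) : Set (Fin m → ℕ) :=
  {e | e ∈ InvSeq0012 m ∧ ℓ ≤ srpt e ∧ srpt e ≤ lastEntry e}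

lemma gamma_mem {n ℓ : ℕ} (hn : 2 ≤ n) (hℓ : ℓ + 2 ≤ n) {e : Fin n → ℕ}
    (he : e ∈ Aset n ℓ) : gammaSeq e ∈ Bset (n - 1) ℓ := by
  obtain ⟨⟨hinv, havoid⟩, hsr, _⟩ := he
  have hinv' : IsInvSeq (gammaSeq e) := by
    intro i
    have := hinv (Fin.castLE (Nat.sub_le n 1) i)
    simpa [gammaSeq] using this
  have havoid' : Avoids0012 (gammaSeq e) := by
    rintro ⟨i, j, k, l, h1, h2, h3, h4, h5, h6⟩
    exact havoid ⟨Fin.castLE (Nat.sub_le n 1) i, Fin.castLE (Nat.sub_le n 1) j,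
      Fin.castLE (Nat.sub_le n 1) k, Fin.castLE (Nat.sub_le n 1) l,
      h1, h2, h3, h4, h5, h6⟩
  have hsub : ∀ w ∈ repeats (gammaSeq e), w ∈ repeats e := by
    rintro w ⟨i, j, hij, hi, hj⟩
    exact ⟨Fin.castLE (Nat.sub_le n 1) i, Fin.castLE (Nat.sub_le n 1) j,
      fun hc => hij (Fin.castLE_injective _ hc), hi, hj⟩
  have hge : ℓ ≤ srpt (gammaSeq e) := by
    by_cases h : (repeats (gammaSeq e)).Nonempty
    · have := srpt_le_of_mem (hsub _ (srpt_mem h))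
      omega
    · rw [srpt_of_empty h]; omega
  refine ⟨⟨hinv', havoid'⟩, hge, ?_⟩
  have hp : srpt (gammaSeq e) ≤ n - 1 - 1 := srpt_le_pred hinv'
  have hlast : lastEntry (gammaSeq e) = gammaSeq e ⟨n - 1 - 1, by omega⟩ := by
    rw [lastEntry, dif_pos (by omega : 0 < n - 1)]
  rw [hlast]
  rcases val_le_or_srpt_le hinv' ⟨n - 1 - 1, by omega⟩ with h' | h'
  · have hv : ((⟨n - 1 - 1, by omega⟩ : Fin (n - 1)) : ℕ) = n - 1 - 1 := rfl
    rw [hv] at h'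
    omega
  · exact h'

/-- Extension of a sequence by the value `ℓ`. -/
def extSeq (n ℓ : ℕ) (e : Fin (n - 1) → ℕ) : Fin n → ℕ :=
  fun i => if h : (i : ℕ) < n - 1 then e ⟨i, h⟩ else ℓ

lemma gamma_ext {n ℓ : ℕ} (e : Fin (n - 1) → ℕ) :
    gammaSeq (extSeq n ℓ e) = e := by
  funext i
  have hi : ((Fin.castLE (Nat.sub_le n 1) i : Fin n) : ℕ) < n - 1 := i.isLt
  simp [gammaSeq, extSeq, hi]

lemma ext_mem {n ℓ : ℕ} (hn : 2 ≤ n) (hℓ : ℓ + 2 ≤ n) {e : Fin (n - 1) → ℕ}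
    (he : e ∈ Bset (n - 1) ℓ) : extSeq n ℓ e ∈ Aset n ℓ := by
  obtain ⟨⟨hinv, havoid⟩, hge, _⟩ := he
  have hinv' : IsInvSeq (extSeq n ℓ e) := by
    intro i
    by_cases h : (i : ℕ) < n - 1
    · simp only [extSeq, dif_pos h]
      exact hinv ⟨i, h⟩
    · simp only [extSeq, dif_neg h]
      have := i.isLt
      omega
  have hlastval : extSeq n ℓ e ⟨n - 1, by omega⟩ = ℓ := by
    have h : ¬ (((⟨n - 1, by omega⟩ : Fin n) : ℕ) < n - 1) := by
      simp
    exact dif_neg h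
  have hlast : lastEntry (extSeq n ℓ e) = ℓ := by
    rw [lastEntry, dif_pos (by omega : 0 < n)]
    exact hlastval
  have hℓval : extSeq n ℓ e ⟨ℓ, by omega⟩ = ℓ := by
    have h1 : ℓ < n - 1 := by omega
    have h2 : extSeq n ℓ e ⟨ℓ, by omega⟩ = e ⟨ℓ, h1⟩ := dif_pos h1
    rw [h2]
    exact entry_eq_of_le_srpt hinv ⟨ℓ, h1⟩ hge
  have hℓmem : ℓ ∈ repeats (extSeq n ℓ e) :=
    ⟨⟨ℓ, by omega⟩, ⟨n - 1, by omega⟩, by simp [Fin.ext_iff]; omega, hℓval, hlastval⟩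
  have havoid' : Avoids0012 (extSeq n ℓ e) := by
    rintro ⟨i, j, k, l, h1, h2, h3, h4, h5, h6⟩
    rw [Fin.lt_def] at h1 h2 h3
    have hl := l.isLt
    have hk : (k : ℕ) < n - 1 := by omega
    have hj : (j : ℕ) < n - 1 := by omega
    have hi : (i : ℕ) < n - 1 := by omega
    have eqi : extSeq n ℓ e i = e ⟨i, hi⟩ := dif_pos hi
    have eqj : extSeq n ℓ e j = e ⟨j, hj⟩ := dif_pos hj
    have eqk : extSeq n ℓ e k = e ⟨k, hk⟩ := dif_pos hk
    rw [eqi] at h4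
    rw [eqj] at h4 h5
    rw [eqk] at h5 h6
    by_cases hl' : (l : ℕ) < n - 1
    · have eql : extSeq n ℓ e l = e ⟨l, hl'⟩ := dif_pos hl'
      rw [eql] at h6
      exact havoid ⟨⟨i, hi⟩, ⟨j, hj⟩, ⟨k, hk⟩, ⟨l, hl'⟩, h1, h2, h3, h4, h5, h6⟩
    · have eql : extSeq n ℓ e l = ℓ := dif_neg hl'
      rw [eql] at h6
      have hwmem : e ⟨i, hi⟩ ∈ repeats e :=
        ⟨⟨i, hi⟩, ⟨j, hj⟩, by simp [Fin.ext_iff]; omega, rfl, h4.symm⟩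
      have := srpt_le_of_mem hwmem
      omega
  have hsr : srpt (extSeq n ℓ e) = ℓ := by
    have h1 : srpt (extSeq n ℓ e) ≤ ℓ := srpt_le_of_mem hℓmem
    obtain ⟨i, j, hij, hi, hj⟩ := srpt_mem ⟨ℓ, hℓmem⟩
    have h2 : ℓ ≤ srpt (extSeq n ℓ e) := by
      by_cases hi' : (i : ℕ) < n - 1
      · by_cases hj' : (j : ℕ) < n - 1
        · have hmem : srpt (extSeq n ℓ e) ∈ repeats e := by
            refine ⟨⟨i, hi'⟩, ⟨j, hj'⟩, ?_, ?_, ?_⟩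
            · simpa [Fin.ext_iff] using (fun hc => hij (Fin.ext hc))
            · rw [← hi]; exact (dif_pos hi' : extSeq n ℓ e i = _).symm
            · rw [← hj]; exact (dif_pos hj' : extSeq n ℓ e j = _).symm
          have := srpt_le_of_mem hmem
          omega
        · rw [← hj]
          exact ge_of_eq (dif_neg hj' : extSeq n ℓ e j = ℓ)
      · rw [← hi]
        exact ge_of_eq (dif_neg hi' : extSeq n ℓ e i = ℓ)
    omega
  exact ⟨⟨hinv', havoid'⟩, hsr, hlast⟩

lemma gamma_injOn (n ℓ : ℕ) (hn : 2 ≤ n) : Set.InjOn gammaSeq (Aset n ℓ) := by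
  intro e1 h1 e2 h2 h
  funext i
  by_cases hi : (i : ℕ) < n - 1
  · have := congrFun h ⟨i, hi⟩
    simpa [gammaSeq, Fin.ext_iff] using this
  · have hival : (i : ℕ) = n - 1 := by have := i.isLt; omega
    have hi1 : i = ⟨n - 1, by omega⟩ := Fin.ext hival
    have e1l : lastEntry e1 = e1 ⟨n - 1, by omega⟩ := by
      rw [lastEntry, dif_pos (by omega : 0 < n)]
    have e2l : lastEntry e2 = e2 ⟨n - 1, by omega⟩ := by
      rw [lastEntry, dif_pos (by omega : 0 < n)]
    rw [hi1, ← e1l, ← e2l, h1.2.2, h2.2.2]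

lemma gamma_image {n ℓ : ℕ} (hn : 2 ≤ n) (hℓ : ℓ + 2 ≤ n) :
    gammaSeq '' (Aset n ℓ) = Bset (n - 1) ℓ := by
  apply Set.Subset.antisymm
  · rintro _ ⟨e, he, rfl⟩
    exact gamma_mem hn hℓ he
  · intro e he
    exact ⟨extSeq n ℓ e, ext_mem hn hℓ he, gamma_ext e⟩

lemma finite_inv (m : ℕ) : {e : Fin m → ℕ | IsInvSeq e}.Finite := by
  apply Set.Finite.subset
    (Set.finite_range (fun g : Fin m → Fin (m + 1) => fun i => (g i : ℕ)))
  intro e he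
  exact ⟨fun i => ⟨e i, by have := he i; have := i.isLt; omega⟩, rfl⟩

/-- For `n ≥ 2` and `0 ≤ ℓ ≤ n - 2`,
`f n ℓ ℓ = ∑_{ℓ'=ℓ}^{n-2} ∑_{k'=ℓ}^{ℓ'} f (n-1) k' ℓ'`. -/
theorem stmt10 (n ℓ : ℕ) (hn : 2 ≤ n) (hℓ : ℓ + 2 ≤ n) :
    f n ℓ ℓ =
      ∑ ℓ' ∈ Finset.Icc ℓ (n - 2), ∑ k' ∈ Finset.Icc ℓ ℓ', f (n - 1) k' ℓ' := by
  classical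
  have hBfin : (Bset (n - 1) ℓ).Finite :=
    (finite_inv (n - 1)).subset (fun e he => he.1.1)
  have hA : f n ℓ ℓ = (Aset n ℓ).ncard := rfl
  have hAB : (Aset n ℓ).ncard = (Bset (n - 1) ℓ).ncard := by
    rw [← gamma_image hn hℓ, Set.ncard_image_of_injOn (gamma_injOn n ℓ hn)]
  rw [hA, hAB, Set.ncard_eq_toFinset_card _ hBfin]
  have hlastB : ∀ e : Fin (n - 1) → ℕ, e ∈ Bset (n - 1) ℓ →
      lastEntry e = e ⟨n - 1 - 1, by omega⟩ := by
    intro e _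
    rw [lastEntry, dif_pos (by omega : 0 < n - 1)]
  have h1 : ∀ e ∈ hBfin.toFinset, lastEntry e ∈ Finset.Icc ℓ (n - 2) := by
    intro e he
    rw [Set.Finite.mem_toFinset] at he
    obtain ⟨⟨hinv, _⟩, hge, hle⟩ := he
    have hb := hinv ⟨n - 1 - 1, by omega⟩
    rw [hlastB e ⟨⟨hinv, ‹_›⟩, hge, hle⟩]
    simp only [Finset.mem_Icc]
    constructor
    · rw [← hlastB e ⟨⟨hinv, ‹_›⟩, hge, hle⟩]; omega
    · omega
  rw [Finset.card_eq_sum_card_fiberwise h1]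
  apply Finset.sum_congr rfl
  intro ℓ' hℓ'
  rw [Finset.mem_Icc] at hℓ'
  have h2 : ∀ e ∈ hBfin.toFinset.filter (fun e => lastEntry e = ℓ'),
      srpt e ∈ Finset.Icc ℓ ℓ' := by
    intro e he
    rw [Finset.mem_filter, Set.Finite.mem_toFinset] at he
    obtain ⟨⟨_, hge, hle⟩, hlast⟩ := he
    simp only [Finset.mem_Icc]
    omega
  rw [Finset.card_eq_sum_card_fiberwise h2]
  apply Finset.sum_congr rfl
  intro k' hk'
  rw [Finset.mem_Icc] at hk'
  have hSfin : {e : Fin (n - 1) → ℕ |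
      e ∈ InvSeq0012 (n - 1) ∧ srpt e = k' ∧ lastEntry e = ℓ'}.Finite :=
    (finite_inv (n - 1)).subset (fun e he => he.1.1)
  have hF : f (n - 1) k' ℓ' = hSfin.toFinset.card :=
    Set.ncard_eq_toFinset_card _ hSfin
  rw [hF]
  congr 1
  apply Finset.ext
  intro e
  simp only [Finset.mem_filter, Set.Finite.mem_toFinset, Set.mem_setOf_eq, Bset]
  constructor
  · rintro ⟨⟨⟨hin, _, _⟩, hlast⟩, hsr⟩
    exact ⟨hin, hsr, hlast⟩
  · rintro ⟨hin, hsr, hlast⟩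
    exact ⟨⟨⟨hin, by omega, by omega⟩, hlast⟩, hsr⟩
end

section
/- For every n ≥ 1 and all nonnegative integers k, ℓ, one has f_n(k, ℓ) ≠ 0 if and only if (k, ℓ) belongs to the set {(k, ℓ) ∈ ℕ² : 0 ≤ k ≤ ℓ ≤ n−1} with the single pair (n−2, n−1) removed. -/
/-- Pigeonhole: if an inversion sequence has `e i < i` somewhere, then some
value `≤ e i` is repeated. -/
lemma pigeon {n : ℕ} {e : Fin n → ℕ} (he : IsInvSeq e) (i : Fin n) (hi : e i < (i : ℕ)) :
    ∃ m ∈ repeats e, m ≤ e i := by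
  set c := e i with hc
  have hiLt := i.isLt
  have hin : ∀ t : ℕ, t < c + 1 → t < n := fun t ht => by omega
  let pos : Fin (c + 2) → Fin n := fun t => if h : (t : ℕ) < c + 1 then ⟨t, hin t h⟩ else i
  have hval : ∀ t, e (pos t) ≤ c := by
    intro t
    simp only [pos]
    split_ifs with h
    · have h2 := he (⟨(t : ℕ), hin t h⟩ : Fin n)
      simp only [Fin.val_mk] at h2
      omega
    · omega
  have hposinj : Function.Injective pos := by
    intro a b hab
    simp only [pos] at hab
    split_ifs at hab with h1 h2 h2
    · exact Fin.val_injective (by simpa using congrArg Fin.val hab)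
    · exfalso; have := congrArg Fin.val hab; simp only at this; omega
    · exfalso; have := congrArg Fin.val hab; simp only at this; omega
    · have ha := a.isLt; have hb := b.isLt
      exact Fin.val_injective (by omega)
  obtain ⟨a, b, hne, heq⟩ := Fintype.exists_ne_map_eq_of_card_lt
      (fun t : Fin (c + 2) => (⟨e (pos t), by have := hval t; omega⟩ : Fin (c + 1)))
      (by simp)
  have heq' : e (pos a) = e (pos b) := by
    simpa using congrArg Fin.val heq
  exact ⟨e (pos a), ⟨pos a, pos b, fun h => hne (hposinj h), rfl, heq'.symm⟩, hval a⟩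

/-- For every `n ≥ 1`, `f n k ℓ ≠ 0` exactly when `0 ≤ k ≤ ℓ ≤ n - 1`
and `(k, ℓ) ≠ (n - 2, n - 1)` (the latter expressed as
`¬(k + 2 = n ∧ ℓ + 1 = n)` to be correct over `ℕ`). -/
theorem stmt12 (n : ℕ) (hn : 1 ≤ n) (k ℓ : ℕ) :
    f n k ℓ ≠ 0 ↔ (k ≤ ℓ ∧ ℓ + 1 ≤ n ∧ ¬(k + 2 = n ∧ ℓ + 1 = n)) := by
  have hlastpos : 0 < n := hn
  constructor
  · intro hf
    obtain ⟨e, ⟨hinv, _⟩, hs, hl⟩ := Set.nonempty_of_ncard_ne_zero hf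
    have hlast : e ⟨n - 1, by omega⟩ = ℓ := by
      rw [lastEntry, dif_pos hlastpos] at hl; exact hl
    have hℓn : ℓ + 1 ≤ n := by
      have := hinv ⟨n - 1, by omega⟩
      simp only [hlast] at this
      omega
    by_cases hrep : (repeats e).Nonempty
    · have hk : k = sInf (repeats e) := by rw [srpt, if_pos hrep] at hs; omega
      have hkmem : k ∈ repeats e := hk ▸ Nat.sInf_mem hrep
      obtain ⟨i, j, hij, hi, hj⟩ := hkmem
      have hkn : k + 1 ≤ n := by
        have := hinv i; have := i.isLt; omega
      -- k ≤ ℓ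
      have hkℓ : k ≤ ℓ := by
        by_contra hlt
        push_neg at hlt
        have hml : e ⟨n - 1, by omega⟩ < n - 1 := by omega
        obtain ⟨m, hm, hmle⟩ := pigeon hinv ⟨n - 1, by omega⟩ hml
        have := Nat.sInf_le hm
        omega
      refine ⟨hkℓ, hℓn, ?_⟩
      rintro ⟨hk2, hℓ1⟩
      -- k = n-2, ℓ = n-1; the two positions of value k must be n-2 and n-1
      have hii : (i : ℕ) = n - 2 ∨ (i : ℕ) = n - 1 := by
        have := hinv i; have := i.isLt; omega
      have hjj : (j : ℕ) = n - 2 ∨ (j : ℕ) = n - 1 := by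
        have := hinv j; have := j.isLt; omega
      have hijne : (i : ℕ) ≠ (j : ℕ) := fun h => hij (Fin.val_injective h)
      have hend : e ⟨n - 1, by omega⟩ = k := by
        rcases hii with h | h <;> rcases hjj with h' | h'
        · omega
        · have hjeq : (⟨n - 1, by omega⟩ : Fin n) = j :=
            Fin.val_injective (by simpa using h'.symm)
          rw [hjeq]; exact hj
        · have hieq : (⟨n - 1, by omega⟩ : Fin n) = i :=
            Fin.val_injective (by simpa using h.symm)
          rw [hieq]; exact hi
        · omega
      omega
    · have hk : k = n - 1 := by rw [srpt, if_neg hrep] at hs; omega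
      have hℓeq : ℓ = n - 1 := by
        by_contra hne
        have hml : e ⟨n - 1, by omega⟩ < n - 1 := by omega
        obtain ⟨m, hm, _⟩ := pigeon hinv ⟨n - 1, by omega⟩ hml
        exact hrep ⟨m, hm⟩
      exact ⟨by omega, hℓn, by omega⟩
  · rintro ⟨hkℓ, hℓn, hnot⟩
    -- witness
    set w : Fin n → ℕ := fun i => if (i : ℕ) = n - 1 then ℓ else min (i : ℕ) k with hw
    have hwval : ∀ i : Fin n, (i : ℕ) ≠ n - 1 → w i = min (i : ℕ) k := by
      intro i hi; simp only [hw, if_neg hi]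
    have hwlast : ∀ i : Fin n, (i : ℕ) = n - 1 → w i = ℓ := by
      intro i hi; simp only [hw, if_pos hi]
    have hwinv : IsInvSeq w := by
      intro i
      by_cases h : (i : ℕ) = n - 1
      · rw [hwlast i h]; omega
      · rw [hwval i h]; omega
    have hwavoid : Avoids0012 w := by
      rintro ⟨i, j, p, q, hij, hjp, hpq, heq, h1, h2⟩
      have hqn := q.isLt
      have hiv : w i = min (i : ℕ) k := hwval i (by omega)
      have hjv : w j = min (j : ℕ) k := hwval j (by omega)
      have hpv : w p = min (p : ℕ) k := hwval p (by omega)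
      rw [hiv, hjv] at heq
      rw [hjv, hpv] at h1
      have hij' : (i : ℕ) < (j : ℕ) := hij
      omega
    have hwlast' : lastEntry w = ℓ := by
      rw [lastEntry, dif_pos hlastpos]
      exact hwlast _ rfl
    have hwsrpt : srpt w = k := by
      by_cases hkn : k + 1 = n
      · -- no repeats; w is the identity
        have hid : ∀ i : Fin n, w i = (i : ℕ) := by
          intro i
          have := i.isLt
          by_cases h : (i : ℕ) = n - 1
          · rw [hwlast i h]; omega
          · rw [hwval i h]; omega
        have hrep : ¬ (repeats w).Nonempty := by
          rintro ⟨m, i, j, hij, hi, hj⟩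
          rw [hid i] at hi; rw [hid j] at hj
          exact hij (Fin.val_injective (by omega))
        rw [srpt, if_neg hrep]; omega
      · have hkn' : k + 1 < n := by omega
        -- k is repeated
        have hkmem : k ∈ repeats w := by
          by_cases hk2 : k + 2 ≤ n - 1
          · refine ⟨⟨k, by omega⟩, ⟨k + 1, by omega⟩, ?_, ?_, ?_⟩
            · intro h; have := congrArg Fin.val h; simp only at this; omega
            · rw [hwval _ (by simp; omega)]; simp
            · rw [hwval _ (by simp; omega)]; simp
          · -- k = n - 2, so ℓ = k
            have hℓk : ℓ = k := by omega
            refine ⟨⟨k, by omega⟩, ⟨n - 1, by omega⟩, ?_, ?_, ?_⟩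
            · intro h; have := congrArg Fin.val h; simp only at this; omega
            · rw [hwval _ (by simp; omega)]; simp
            · rw [hwlast _ (by simp)]; omega
        have hlb : ∀ m ∈ repeats w, k ≤ m := by
          rintro m ⟨i, j, hij, hi, hj⟩
          have hijne : (i : ℕ) ≠ (j : ℕ) := fun h => hij (Fin.val_injective h)
          by_cases h1 : (i : ℕ) = n - 1
          · rw [hwlast i h1] at hi; omega
          by_cases h2 : (j : ℕ) = n - 1
          · rw [hwlast j h2] at hj; omega
          rw [hwval i h1] at hi; rw [hwval j h2] at hj
          omega
        have hne : (repeats w).Nonempty := ⟨k, hkmem⟩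
        rw [srpt, if_pos hne]
        exact le_antisymm (Nat.sInf_le hkmem) (hlb _ (Nat.sInf_mem hne))
    -- finiteness
    have hfin : {e : Fin n → ℕ | e ∈ InvSeq0012 n ∧ srpt e = k ∧ lastEntry e = ℓ}.Finite := by
      apply Set.Finite.subset (Set.Finite.pi (t := fun i : Fin n => Set.Iic (i : ℕ))
        (fun i => Set.finite_Iic _))
      rintro e ⟨⟨hinv, _⟩, _⟩ i _
      exact hinv i
    have hmem : w ∈ {e : Fin n → ℕ | e ∈ InvSeq0012 n ∧ srpt e = k ∧ lastEntry e = ℓ} :=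
      ⟨⟨hwinv, hwavoid⟩, hwsrpt, hwlast'⟩
    rw [f]
    exact ((Set.ncard_pos hfin).mpr ⟨w, hmem⟩).ne'
end

section
/- For every n ≥ 2 and every k with 0 ≤ k ≤ n−2, f_n(k, k) = f_{n−k}(0, 0). -/
lemma norep {n k : ℕ} {e : Fin n → ℕ} (hs : srpt e = k) (hne : (repeats e).Nonempty)
    {i j : Fin n} (hv : e i < k) (hij : e i = e j) : i = j := by
  by_contra h
  have hmem : e i ∈ repeats e := ⟨i, j, h, rfl, hij.symm⟩
  have h2 : sInf (repeats e) ≤ e i := Nat.sInf_le hmem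
  unfold srpt at hs
  rw [if_pos hne] at hs
  omega

lemma prefix_id {n k : ℕ} {e : Fin n → ℕ} (hinv : IsInvSeq e) (hs : srpt e = k)
    (hne : (repeats e).Nonempty) : ∀ i : Fin n, (i : ℕ) < k → e i = (i : ℕ) := by
  have H : ∀ m : ℕ, ∀ i : Fin n, (i : ℕ) = m → m < k → e i = m := by
    intro m
    induction m using Nat.strong_induction_on with
    | _ m ih =>
      intro i him hmk
      have h1 : e i ≤ m := him ▸ hinv i
      rcases eq_or_lt_of_le h1 with h | h
      · exact h
      · exfalso
        have hein : e i < n := by have := i.isLt; omega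
        have hej : e ⟨e i, hein⟩ = e i := ih (e i) h ⟨e i, hein⟩ rfl (by omega)
        have hji : (⟨e i, hein⟩ : Fin n) = i :=
          norep hs hne (show e ⟨e i, hein⟩ < k by rw [hej]; omega) hej
        have : e i = (i : ℕ) := congrArg Fin.val hji
        omega
  intro i hi
  exact H (i : ℕ) i rfl hi

lemma tail_ge {n k : ℕ} {e : Fin n → ℕ} (hinv : IsInvSeq e) (hs : srpt e = k)
    (hne : (repeats e).Nonempty) : ∀ i : Fin n, k ≤ (i : ℕ) → k ≤ e i := by
  intro i hi
  by_contra h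
  push_neg at h
  have hein : e i < n := by have := i.isLt; omega
  have hej : e ⟨e i, hein⟩ = e i := prefix_id hinv hs hne ⟨e i, hein⟩ h
  have hji : (⟨e i, hein⟩ : Fin n) = i :=
    norep hs hne (show e ⟨e i, hein⟩ < k by rw [hej]; exact h) hej
  have : e i = (i : ℕ) := congrArg Fin.val hji
  omega

/-- For `n ≥ 2` and `0 ≤ k ≤ n - 2`, `f n k k = f (n-k) 0 0`. -/
theorem stmt13 (n k : ℕ) (hn : 2 ≤ n) (hk : k + 2 ≤ n) :
    f n k k = f (n - k) 0 0 := by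
  classical
  set S : Set (Fin n → ℕ) :=
    {e | e ∈ InvSeq0012 n ∧ srpt e = k ∧ lastEntry e = k} with hS
  set T : Set (Fin (n - k) → ℕ) :=
    {e | e ∈ InvSeq0012 (n - k) ∧ srpt e = 0 ∧ lastEntry e = 0} with hT
  set Φ : (Fin n → ℕ) → (Fin (n - k) → ℕ) :=
    fun e j => e ⟨k + (j : ℕ), by have := j.isLt; omega⟩ - k with hΦ
  -- nonemptiness of repeats on S
  have hneS : ∀ e ∈ S, (repeats e).Nonempty := by
    intro e he
    by_contra h
    have : srpt e = n - 1 := by unfold srpt; rw [if_neg h]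
    have := he.2.1
    omega
  have hneT : ∀ e ∈ T, (repeats e).Nonempty := by
    intro e he
    by_contra h
    have : srpt e = n - k - 1 := by unfold srpt; rw [if_neg h]
    have := he.2.1
    omega
  have key : Φ '' S = T := by
    apply Set.Subset.antisymm
    · rintro _ ⟨e, he, rfl⟩
      have hne := hneS e he
      obtain ⟨⟨hinv, hav⟩, hsr, hle⟩ := he
      have htg := tail_ge hinv hsr hne
      have hpi := prefix_id hinv hsr hne
      refine ⟨⟨?_, ?_⟩, ?_, ?_⟩
      · intro j
        have h := hinv ⟨k + (j : ℕ), by have := j.isLt; omega⟩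
        simp only [Fin.val_mk] at h
        simp only [hΦ]
        omega
      · rintro ⟨i, j, p, l, h1, h2, h3, h4, h5, h6⟩
        apply hav
        refine ⟨⟨k + i, by have := i.isLt; omega⟩, ⟨k + j, by have := j.isLt; omega⟩,
          ⟨k + p, by have := p.isLt; omega⟩, ⟨k + l, by have := l.isLt; omega⟩,
          ?_, ?_, ?_, ?_, ?_, ?_⟩
        · exact Fin.mk_lt_mk.mpr (by have := Fin.lt_def.mp h1; omega)
        · exact Fin.mk_lt_mk.mpr (by have := Fin.lt_def.mp h2; omega)
        · exact Fin.mk_lt_mk.mpr (by have := Fin.lt_def.mp h3; omega)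
        · have gi := htg ⟨k + i, by have := i.isLt; omega⟩ (by simp)
          have gj := htg ⟨k + j, by have := j.isLt; omega⟩ (by simp)
          simp only [hΦ] at h4
          omega
        · have gj := htg ⟨k + j, by have := j.isLt; omega⟩ (by simp)
          simp only [hΦ] at h5
          omega
        · have gp := htg ⟨k + p, by have := p.isLt; omega⟩ (by simp)
          simp only [hΦ] at h6
          omega
      · -- srpt (Φ e) = 0
        have hksr : k ∈ repeats e := by
          have : sInf (repeats e) = k := by
            unfold srpt at hsr; rwa [if_pos hne] at hsr
          exact this ▸ Nat.sInf_mem hne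
        obtain ⟨i, j, hij, hei, hej⟩ := hksr
        have hik : k ≤ (i : ℕ) := by
          by_contra h
          push_neg at h
          have := hpi i h
          omega
        have hjk : k ≤ (j : ℕ) := by
          by_contra h
          push_neg at h
          have := hpi j h
          omega
        have hmem : 0 ∈ repeats (Φ e) := by
          refine ⟨⟨(i : ℕ) - k, by have := i.isLt; omega⟩,
            ⟨(j : ℕ) - k, by have := j.isLt; omega⟩, ?_, ?_, ?_⟩
          · intro h
            apply hij
            have := congrArg Fin.val h
            simp only [Fin.val_mk] at this
            exact Fin.ext (by omega)
          · simp only [hΦ]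
            have : (⟨k + ((i : ℕ) - k), by have := i.isLt; omega⟩ : Fin n) = i :=
              Fin.ext (by simp; omega)
            rw [this, hei]
            omega
          · simp only [hΦ]
            have : (⟨k + ((j : ℕ) - k), by have := j.isLt; omega⟩ : Fin n) = j :=
              Fin.ext (by simp; omega)
            rw [this, hej]
            omega
        unfold srpt
        rw [if_pos ⟨0, hmem⟩]
        exact Nat.le_antisymm (Nat.sInf_le hmem) (Nat.zero_le _)
      · -- lastEntry (Φ e) = 0
        unfold lastEntry
        rw [dif_pos (by omega : 0 < n - k)]
        simp only [hΦ]
        unfold lastEntry at hle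
        rw [dif_pos (by omega : 0 < n)] at hle
        have : (⟨k + (n - k - 1), by omega⟩ : Fin n) = ⟨n - 1, by omega⟩ :=
          Fin.ext (by simp; omega)
        rw [this, hle]
        omega
    · rintro e' ⟨⟨hinv', hav'⟩, hsr', hle'⟩
      set E : Fin n → ℕ := fun i =>
        if h : (i : ℕ) < k then (i : ℕ) else e' ⟨(i : ℕ) - k, by have := i.isLt; omega⟩ + k
        with hE
      have hne' : (repeats e').Nonempty := hneT e' ⟨⟨hinv', hav'⟩, hsr', hle'⟩
      have hEtail : ∀ i : Fin n, k ≤ (i : ℕ) →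
          E i = e' ⟨(i : ℕ) - k, by have := i.isLt; omega⟩ + k := by
        intro i hi
        simp only [hE]
        rw [dif_neg (by omega)]
      have hEpre : ∀ i : Fin n, (i : ℕ) < k → E i = (i : ℕ) := by
        intro i hi
        simp only [hE]
        rw [dif_pos hi]
      have hEinv : IsInvSeq E := by
        intro i
        by_cases h : (i : ℕ) < k
        · rw [hEpre i h]
        · push_neg at h
          rw [hEtail i h]
          have := hinv' ⟨(i : ℕ) - k, by have := i.isLt; omega⟩
          simp at this
          omega
      have hEav : Avoids0012 E := by
        rintro ⟨i, j, p, l, h1, h2, h3, h4, h5, h6⟩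
        have hik : k ≤ (i : ℕ) := by
          by_contra h
          push_neg at h
          rw [hEpre i h] at h4
          by_cases hj : (j : ℕ) < k
          · rw [hEpre j hj] at h4
            have := Fin.lt_def.mp h1
            omega
          · push_neg at hj
            rw [hEtail j hj] at h4
            omega
        have hjk : k ≤ (j : ℕ) := le_trans hik (le_of_lt (Fin.lt_def.mp h1))
        have hpk : k ≤ (p : ℕ) := le_trans hjk (le_of_lt (Fin.lt_def.mp h2))
        have hlk : k ≤ (l : ℕ) := le_trans hpk (le_of_lt (Fin.lt_def.mp h3))
        apply hav'
        refine ⟨⟨(i : ℕ) - k, by have := i.isLt; omega⟩,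
          ⟨(j : ℕ) - k, by have := j.isLt; omega⟩,
          ⟨(p : ℕ) - k, by have := p.isLt; omega⟩,
          ⟨(l : ℕ) - k, by have := l.isLt; omega⟩, ?_, ?_, ?_, ?_, ?_, ?_⟩
        · exact Fin.mk_lt_mk.mpr (by have := Fin.lt_def.mp h1; omega)
        · exact Fin.mk_lt_mk.mpr (by have := Fin.lt_def.mp h2; omega)
        · exact Fin.mk_lt_mk.mpr (by have := Fin.lt_def.mp h3; omega)
        · rw [hEtail i hik, hEtail j hjk] at h4; omega
        · rw [hEtail j hjk, hEtail p hpk] at h5; omega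
        · rw [hEtail p hpk, hEtail l hlk] at h6; omega
      have hEsr : srpt E = k := by
        have h0 : (0 : ℕ) ∈ repeats e' := by
          have : sInf (repeats e') = 0 := by
            unfold srpt at hsr'; rwa [if_pos hne'] at hsr'
          exact this ▸ Nat.sInf_mem hne'
        obtain ⟨i, j, hij, hei, hej⟩ := h0
        have hkmem : k ∈ repeats E := by
          refine ⟨⟨k + (i : ℕ), by have := i.isLt; omega⟩,
            ⟨k + (j : ℕ), by have := j.isLt; omega⟩, ?_, ?_, ?_⟩
          · intro h
            apply hij
            have := congrArg Fin.val h
            simp only [Fin.val_mk] at this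
            exact Fin.ext (by omega)
          · rw [hEtail _ (by simp)]
            have : (⟨k + (i : ℕ) - k, by have := i.isLt; omega⟩ : Fin (n - k)) = i :=
              Fin.ext (by simp)
            rw [this, hei]
            omega
          · rw [hEtail _ (by simp)]
            have : (⟨k + (j : ℕ) - k, by have := j.isLt; omega⟩ : Fin (n - k)) = j :=
              Fin.ext (by simp)
            rw [this, hej]
            omega
        have hge : ∀ m ∈ repeats E, k ≤ m := by
          rintro m ⟨i, j, hij, hei, hej⟩
          by_cases hi : (i : ℕ) < k
          · rw [hEpre i hi] at hei
            by_cases hj : (j : ℕ) < k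
            · rw [hEpre j hj] at hej
              exact absurd (Fin.ext (by omega : (i : ℕ) = (j : ℕ))) hij
            · push_neg at hj
              rw [hEtail j hj] at hej
              omega
          · push_neg at hi
            rw [hEtail i hi] at hei
            omega
        unfold srpt
        rw [if_pos ⟨k, hkmem⟩]
        exact Nat.le_antisymm (Nat.sInf_le hkmem) (hge _ (Nat.sInf_mem ⟨k, hkmem⟩))
      have hEle : lastEntry E = k := by
        unfold lastEntry
        rw [dif_pos (by omega : 0 < n)]
        rw [hEtail ⟨n - 1, by omega⟩ (by simp; omega)]
        unfold lastEntry at hle'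
        rw [dif_pos (by omega : 0 < n - k)] at hle'
        have : (⟨(n : ℕ) - 1 - k, by omega⟩ : Fin (n - k)) = ⟨n - k - 1, by omega⟩ :=
          Fin.ext (by simp; omega)
        simp only [Fin.val_mk]
        rw [this, hle']
        omega
      refine ⟨E, ⟨⟨hEinv, hEav⟩, hEsr, hEle⟩, ?_⟩
      funext j
      simp only [hΦ]
      rw [hEtail _ (by simp)]
      have : (⟨k + (j : ℕ) - k, by have := j.isLt; omega⟩ : Fin (n - k)) = j :=
        Fin.ext (by simp)
      rw [this]
      omega
  have inj : Set.InjOn Φ S := by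
    intro e1 he1 e2 he2 heq
    have hne1 := hneS e1 he1
    have hne2 := hneS e2 he2
    funext i
    by_cases h : (i : ℕ) < k
    · rw [prefix_id he1.1.1 he1.2.1 hne1 i h, prefix_id he2.1.1 he2.2.1 hne2 i h]
    · push_neg at h
      have g1 := tail_ge he1.1.1 he1.2.1 hne1 i h
      have g2 := tail_ge he2.1.1 he2.2.1 hne2 i h
      have := congrFun heq ⟨(i : ℕ) - k, by have := i.isLt; omega⟩
      simp only [hΦ] at this
      have hidx : (⟨k + ((i : ℕ) - k), by have := i.isLt; omega⟩ : Fin n) = i :=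
        Fin.ext (by simp; omega)
      rw [hidx] at this
      omega
  calc f n k k = S.ncard := rfl
    _ = (Φ '' S).ncard := (Set.ncard_image_of_injOn inj).symm
    _ = T.ncard := by rw [key]
    _ = f (n - k) 0 0 := rfl
end

section
/- For every n ≥ 3 and every k with 0 ≤ k ≤ n−3, f_n(k, n−1) = 2^{n−3−k}. (This is the coefficient form of the generating function identity ∑_{n≥1} ∑_{k=0}^{n−1} f_n(k, n−1) x^k q^n = q(1−q)² / ((1−2q)(1−xq)).) -/
/-
A sequence `e` counted by `f n k (n - 1)` starts with the staircase `0 1 ⋯ k`, since a smaller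
value repeating would contradict `srpt e = k`. Its last entry `n - 1` exceeds every earlier entry,
so avoiding `0012` forbids any rise after a repeated value before the last position. Hence `e` is
the staircase `0 1 ⋯ m` for some `k ≤ m ≤ n - 3`, then a weakly decreasing run with values in
`[k, m]` ending with `k` at position `n - 2`, then `n - 1`. For fixed `m` the free middle part is a
weakly decreasing sequence of length `n - 3 - m` with values in `[k, m]`, so there are
`(n - 3 - k).choose (n - 3 - m)` of them, and summing over `m` gives `2 ^ (n - 3 - k)`.
-/

def boundedAntitone (p q : ℕ) : Set (Fin p → ℕ) := {g | Antitone g ∧ ∀ i, g i ≤ q}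

lemma boundedAntitone_finite (p q : ℕ) : (boundedAntitone p q).Finite :=
  (Set.Finite.pi (t := fun _ => Set.Iic q) fun _ => Set.finite_Iic q).subset
    fun _ hg i _ => hg.2 i

lemma Fin.antitone_cons_iff {p : ℕ} {a : ℕ} {g : Fin p → ℕ} :
    Antitone (Fin.cons a g : Fin (p + 1) → ℕ) ↔ (∀ i, g i ≤ a) ∧ Antitone g := by
  simpa only [antitone_iff_forall_lt, Relator.LiftFun, ge_iff_le] using
    Fin.liftFun_cons (α := ℕ) (· ≥ ·) (f := g) (a := a)

lemma boundedAntitone_succ_succ (p q : ℕ) :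
    boundedAntitone (p + 1) (q + 1) =
      Fin.cons (q + 1) '' boundedAntitone p (q + 1) ∪ boundedAntitone (p + 1) q := by
  ext g
  constructor
  · rintro ⟨hanti, hle⟩
    by_cases h0 : g 0 = q + 1
    · refine Or.inl ⟨Fin.tail g, ⟨hanti.comp_monotone (Fin.strictMono_succ.monotone),
        fun i => hle _⟩, ?_⟩
      rw [← h0, Fin.cons_self_tail]
    · exact Or.inr ⟨hanti, fun i => by have := hanti (Fin.zero_le i); have := hle 0; omega⟩
  · rintro (⟨g, ⟨hanti, hle⟩, rfl⟩ | ⟨hanti, hle⟩)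
    · exact ⟨Fin.antitone_cons_iff.2 ⟨hle, hanti⟩, Fin.cases le_rfl hle⟩
    · exact ⟨hanti, fun i => (hle i).trans q.le_succ⟩

lemma ncard_boundedAntitone (p q : ℕ) : (boundedAntitone p q).ncard = (p + q).choose p := by
  induction p generalizing q with
  | zero =>
    have : boundedAntitone 0 q = {Fin.elim0} := Set.eq_singleton_iff_unique_mem.2
      ⟨⟨fun i => i.elim0, fun i => i.elim0⟩, fun g _ => Subsingleton.elim _ _⟩
    rw [this, Set.ncard_singleton, Nat.choose_zero_right]
  | succ p ihp =>
    induction q with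
    | zero =>
      have : boundedAntitone (p + 1) 0 = {0} := Set.eq_singleton_iff_unique_mem.2
        ⟨⟨antitone_const, fun _ => le_rfl⟩, fun g hg => funext fun i => Nat.le_zero.1 (hg.2 i)⟩
      rw [this, Set.ncard_singleton, Nat.add_zero, Nat.choose_self]
    | succ q ihq =>
      have hdisj : Disjoint (Fin.cons (q + 1) '' boundedAntitone p (q + 1))
          (boundedAntitone (p + 1) q) := by
        rw [Set.disjoint_left]
        rintro _ ⟨g, -, rfl⟩ ⟨-, hle⟩
        simpa using hle 0
      rw [boundedAntitone_succ_succ, Set.ncard_union_eq hdisj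
        ((boundedAntitone_finite _ _).image _) (boundedAntitone_finite _ _),
        Set.ncard_image_of_injective _ (Fin.cons_right_injective _), ihp, ihq,
        show p + 1 + (q + 1) = p + (q + 1) + 1 by omega, Nat.choose_succ_succ]
      congr 2
      omega

lemma lastEntry_eq {n : ℕ} (e : Fin (n + 1) → ℕ) : lastEntry e = e (Fin.last n) := by
  simp [lastEntry, Fin.last]

lemma srpt_eq_iff_isLeast {n k : ℕ} {e : Fin n → ℕ} (hk : k < n - 1) :
    srpt e = k ↔ IsLeast (repeats e) k := by
  unfold srpt
  split_ifs with h
  · exact ⟨fun hs => hs ▸ ⟨Nat.sInf_mem h, fun _ hv => Nat.sInf_le hv⟩, IsLeast.csInf_eq⟩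
  · exact ⟨fun hs => by omega, fun hl => absurd ⟨k, hl.1⟩ h⟩

lemma Avoids0012.apply_le_of_apply_eq {n : ℕ} {e : Fin n → ℕ} (h : Avoids0012 e)
    {i j p l : Fin n} (hij : i < j) (hjp : j < p) (hpl : p < l) (heq : e i = e j)
    (hl : e p < e l) : e p ≤ e j := by
  by_contra! hjp'
  exact h ⟨i, j, p, l, hij, hjp, hpl, heq, hjp', hl⟩

namespace IsInvSeq

variable {n k : ℕ} {e : Fin n → ℕ}

lemma apply_eq_self (he : IsInvSeq e) (hR : k ∈ lowerBounds (repeats e)) (i : Fin n)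
    (hi : (i : ℕ) ≤ k) : e i = i := by
  induction i using WellFoundedLT.induction with
  | _ i ih =>
    by_contra hne
    have hlt : e i < i := lt_of_le_of_ne (he i) hne
    let j : Fin n := ⟨e i, by omega⟩
    have hj : e j = e i := ih j hlt (show e i ≤ k by omega)
    exact absurd (hR ⟨j, i, Fin.ne_of_lt hlt, hj, rfl⟩) (by omega)

lemma le_apply (he : IsInvSeq e) (hR : k ∈ lowerBounds (repeats e)) (i : Fin n)
    (hi : k ≤ (i : ℕ)) : k ≤ e i := by
  by_contra! hlt
  let j : Fin n := ⟨e i, by omega⟩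
  have hj : e j = e i := he.apply_eq_self hR j hlt.le
  exact absurd (hR ⟨j, i, Fin.ne_of_val_ne (by simp only [j]; omega), hj, rfl⟩) (by omega)

end IsInvSeq

-- Written for `n = N + 3`, so that `N + 1` and `N + 2` are the last two positions.
def peakShape (N k m : ℕ) : Set (Fin (N + 3) → ℕ) :=
  {e | (∀ i : Fin (N + 3), (i : ℕ) ≤ m → e i = i) ∧
    AntitoneOn e (Fin.val ⁻¹' Set.Icc m (N + 1)) ∧
    e ⟨N + 1, by omega⟩ = k ∧ e (Fin.last (N + 2)) = N + 2}

section peakShape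

variable {N k m : ℕ} {e : Fin (N + 3) → ℕ}

lemma apply_mem_Icc_of_mem_peakShape (he : e ∈ peakShape N k m) (hm : m ≤ N)
    {j : Fin (N + 3)} (hmj : m ≤ (j : ℕ)) (hj : (j : ℕ) ≤ N + 1) : k ≤ e j ∧ e j ≤ m := by
  obtain ⟨hstair, hanti, hpen, -⟩ := he
  constructor
  · simpa only [hpen] using hanti (a := j) (b := ⟨N + 1, by omega⟩) ⟨hmj, hj⟩
      (show m ≤ N + 1 ∧ N + 1 ≤ N + 1 by omega) (Fin.le_def.2 hj)
  · simpa only [hstair ⟨m, by omega⟩ le_rfl] using hanti (a := ⟨m, by omega⟩) (b := j)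
      (show m ≤ m ∧ m ≤ N + 1 by omega) ⟨hmj, hj⟩ (Fin.le_def.2 hmj)

lemma isInvSeq_of_mem_peakShape (he : e ∈ peakShape N k m) (hm : m ≤ N) : IsInvSeq e := by
  intro i
  by_cases him : (i : ℕ) ≤ m
  · exact (he.1 i him).le
  by_cases hi : (i : ℕ) ≤ N + 1
  · have := (apply_mem_Icc_of_mem_peakShape he hm (by omega) hi).2
    omega
  · obtain rfl : i = Fin.last (N + 2) := Fin.ext (by simp; omega)
    exact he.2.2.2.le

lemma avoids0012_of_mem_peakShape (he : e ∈ peakShape N k m) : Avoids0012 e := by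
  rintro ⟨i, j, p, l, hij, hjp, hpl, heq, hjp', -⟩
  have hl := l.isLt
  simp only [Fin.lt_def] at hij hjp hpl
  by_cases hjm : (j : ℕ) ≤ m
  · rw [he.1 i (by omega), he.1 j hjm] at heq
    omega
  · have := he.2.1 (show m ≤ (j : ℕ) ∧ (j : ℕ) ≤ N + 1 by omega)
      (show m ≤ (p : ℕ) ∧ (p : ℕ) ≤ N + 1 by omega) (Fin.le_def.2 hjp.le)
    omega

lemma isLeast_repeats_of_mem_peakShape (he : e ∈ peakShape N k m) (hkm : k ≤ m) (hm : m ≤ N) :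
    IsLeast (repeats e) k := by
  refine ⟨⟨⟨k, by omega⟩, ⟨N + 1, by omega⟩, Fin.ne_of_val_ne (by simp; omega),
    he.1 _ hkm, he.2.2.1⟩, ?_⟩
  suffices ∀ i j : Fin (N + 3), i < j → e i = e j → k ≤ e j by
    rintro v ⟨i, j, hij, rfl, hj⟩
    rcases lt_or_gt_of_ne hij with h | h
    · exact hj ▸ this i j h hj.symm
    · exact this j i h hj
  intro i j hij heq
  rw [Fin.lt_def] at hij
  by_cases hjm : (j : ℕ) ≤ m
  · rw [he.1 i (by omega), he.1 j hjm] at heq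
    omega
  by_cases hj : (j : ℕ) ≤ N + 1
  · exact (apply_mem_Icc_of_mem_peakShape he hm (by omega) hj).1
  · obtain rfl : j = Fin.last (N + 2) := Fin.ext (by simp; omega)
    have := isInvSeq_of_mem_peakShape he hm i
    rw [heq, he.2.2.2] at this
    omega

lemma peakShape_subset (hkm : k ≤ m) (hm : m ≤ N) :
    peakShape N k m ⊆ {e | e ∈ InvSeq0012 (N + 3) ∧ srpt e = k ∧ lastEntry e = N + 2} :=
  fun _ he => ⟨⟨isInvSeq_of_mem_peakShape he hm, avoids0012_of_mem_peakShape he⟩,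
    (srpt_eq_iff_isLeast (by omega)).2 (isLeast_repeats_of_mem_peakShape he hkm hm),
    (lastEntry_eq _).trans he.2.2.2⟩

lemma pairwiseDisjoint_peakShape : (Set.Iic N).PairwiseDisjoint (peakShape N k) := by
  suffices ∀ m m', m < m' → m ≤ N → Disjoint (peakShape N k m) (peakShape N k m') from
    fun m hm m' hm' hne => (lt_or_gt_of_ne hne).elim (this m m' · hm) (this m' m · hm' |>.symm)
  refine fun m m' hmm' hm => Set.disjoint_left.2 fun e he he' => ?_
  have h1 := he'.1 ⟨m + 1, by omega⟩ hmm'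
  have h2 := (apply_mem_Icc_of_mem_peakShape he hm (j := ⟨m + 1, by omega⟩) (by simp)
    (by simp; omega)).2
  simp only at h1 h2
  omega

end peakShape

/-- Since the last entry `n` exceeds every earlier entry, a rise after a repeated value would
complete a `0012`. -/
lemma apply_le_of_apply_eq_of_last_eq {n : ℕ} {e : Fin (n + 1) → ℕ} (he : e ∈ InvSeq0012 (n + 1))
    (hlast : e (Fin.last n) = n) {i j p : Fin (n + 1)} (hij : i < j) (hjp : j < p)
    (hp : p < Fin.last n) (heq : e i = e j) : e p ≤ e j :=
  he.2.apply_le_of_apply_eq hij hjp hp heq (by rw [hlast]; exact (he.1 p).trans_lt hp)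

lemma antitoneOn_Icc_succ {n m j : ℕ} {e : Fin n → ℕ} (hj : j + 1 < n)
    (hanti : AntitoneOn e (Fin.val ⁻¹' Set.Icc m j)) (hstep : e ⟨j + 1, hj⟩ ≤ e ⟨j, by omega⟩) :
    AntitoneOn e (Fin.val ⁻¹' Set.Icc m (j + 1)) := by
  rintro a ⟨hma, ha⟩ b ⟨hmb, hb⟩ hab
  rw [Fin.le_def] at hab
  by_cases hbj : (b : ℕ) ≤ j
  · exact hanti ⟨hma, by omega⟩ ⟨hmb, hbj⟩ (Fin.le_def.2 hab)
  by_cases haj : (a : ℕ) ≤ j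
  · rw [show b = ⟨j + 1, hj⟩ from Fin.ext (by simp; omega)]
    exact hstep.trans (hanti (b := ⟨j, by omega⟩) ⟨hma, haj⟩
      (show m ≤ j ∧ j ≤ j from ⟨by omega, le_rfl⟩) (Fin.le_def.2 haj))
  · rw [Fin.ext (show (a : ℕ) = b by omega)]

section Decomposition

variable {N k : ℕ} {e : Fin (N + 3) → ℕ}

lemma apply_penultimate_eq (he : e ∈ InvSeq0012 (N + 3)) (hR : IsLeast (repeats e) k)
    (hkN : k ≤ N) (hlast : e (Fin.last (N + 2)) = N + 2) : e ⟨N + 1, by omega⟩ = k := by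
  suffices ∀ i j : Fin (N + 3), i < j → e i = k → e j = k → e ⟨N + 1, by omega⟩ = k by
    obtain ⟨i, j, hij, hi, hj⟩ := hR.1
    rcases lt_or_gt_of_ne hij with h | h
    exacts [this i j h hi hj, this j i h hj hi]
  intro i j hij hi hj
  have hjN : (j : ℕ) ≤ N + 1 := by
    by_contra
    obtain rfl : j = Fin.last (N + 2) := Fin.ext (by simp; omega)
    omega
  rcases hjN.lt_or_eq with hjN | hjN
  · have := apply_le_of_apply_eq_of_last_eq he hlast hij (p := ⟨N + 1, by omega⟩)
      (Fin.lt_def.2 hjN) (Fin.lt_def.2 (by simp)) (hi.trans hj.symm)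
    have := he.1.le_apply hR.2 ⟨N + 1, by omega⟩ (by simp; omega)
    omega
  · rw [← hj]
    exact congrArg e (Fin.ext hjN.symm)

lemma staircase_or_antitoneOn (he : e ∈ InvSeq0012 (N + 3)) (hR : IsLeast (repeats e) k)
    (hlast : e (Fin.last (N + 2)) = N + 2) (d : ℕ) (hd : k + d ≤ N + 1) :
    (∀ i : Fin (N + 3), (i : ℕ) ≤ k + d → e i = i) ∨
      ∃ m, k ≤ m ∧ m < k + d ∧ (∀ i : Fin (N + 3), (i : ℕ) ≤ m → e i = i) ∧
        AntitoneOn e (Fin.val ⁻¹' Set.Icc m (k + d)) := by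
  induction d with
  | zero => exact Or.inl (he.1.apply_eq_self hR.2)
  | succ d ih =>
    rcases ih (by omega) with hstair | ⟨m, hkm, hmd, hstair, hanti⟩
    · by_cases hp : e ⟨k + d + 1, by omega⟩ = k + d + 1
      · refine Or.inl fun i hi => ?_
        rcases hi.lt_or_eq with hi | hi
        · exact hstair i (by omega)
        · rw [show i = ⟨k + d + 1, by omega⟩ from Fin.ext hi, hp]
      · have hstep : e ⟨k + d + 1, by omega⟩ ≤ e ⟨k + d, by omega⟩ := by
          have := he.1 ⟨k + d + 1, by omega⟩
          rw [hstair ⟨k + d, by omega⟩ le_rfl]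
          simp only at this ⊢
          omega
        refine Or.inr ⟨k + d, by omega, by omega, hstair,
          antitoneOn_Icc_succ (j := k + d) _ ?_ hstep⟩
        intro a ha b hb _
        simp only [Set.mem_preimage, Set.mem_Icc] at ha hb
        exact le_of_eq (congrArg e (Fin.ext (by omega)))
    · have hq : e ⟨k + d, by omega⟩ ≤ m := by
        simpa only [hstair ⟨m, by omega⟩ le_rfl] using
          hanti (a := ⟨m, by omega⟩) (b := ⟨k + d, by omega⟩)
            (show m ≤ m ∧ m ≤ k + d by omega) (show m ≤ k + d ∧ k + d ≤ k + d by omega)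
            (Fin.le_def.2 (by simp; omega))
      have hstep := apply_le_of_apply_eq_of_last_eq he hlast (i := ⟨_, by omega⟩)
        (j := ⟨k + d, by omega⟩) (p := ⟨k + d + 1, by omega⟩)
        (Fin.lt_def.2 (show e ⟨k + d, _⟩ < k + d by omega)) (Fin.lt_def.2 (by simp))
        (Fin.lt_def.2 (by simp; omega)) (hstair ⟨_, by omega⟩ hq)
      exact Or.inr ⟨m, hkm, by omega, hstair, antitoneOn_Icc_succ (j := k + d) _ hanti hstep⟩

lemma exists_mem_peakShape (he : e ∈ InvSeq0012 (N + 3)) (hR : IsLeast (repeats e) k)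
    (hkN : k ≤ N) (hlast : e (Fin.last (N + 2)) = N + 2) :
    ∃ m ∈ Set.Icc k N, e ∈ peakShape N k m := by
  have hpen := apply_penultimate_eq he hR hkN hlast
  rcases staircase_or_antitoneOn he hR hlast (N + 1 - k) (by omega) with
    hstair | ⟨m, hkm, hmN, hstair, hanti⟩
  · have := hstair ⟨N + 1, by omega⟩ (by simp; omega)
    simp only [hpen] at this
    omega
  · refine ⟨m, ⟨hkm, by omega⟩, hstair, ?_, hpen, hlast⟩
    rwa [show k + (N + 1 - k) = N + 1 by omega] at hanti

end Decomposition

def peakExtend (N k m : ℕ) (g : Fin (N - m) → ℕ) : Fin (N + 3) → ℕ := fun i =>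
  if hm : (i : ℕ) ≤ m then i
  else if hN : (i : ℕ) ≤ N then k + g ⟨i - (m + 1), by omega⟩
  else if (i : ℕ) = N + 1 then k else N + 2

section peakExtend

variable {N k m : ℕ}

lemma peakExtend_injective : Function.Injective (peakExtend N k m) := by
  intro g g' h
  funext j
  have := congrFun h ⟨m + 1 + j, by omega⟩
  simpa [peakExtend, show ¬ m + 1 + (j : ℕ) ≤ m by omega, show m + 1 + (j : ℕ) ≤ N by omega]
    using this

lemma peakExtend_mem_peakShape (hkm : k ≤ m) (hm : m ≤ N) {g : Fin (N - m) → ℕ}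
    (hg : g ∈ boundedAntitone (N - m) (m - k)) : peakExtend N k m g ∈ peakShape N k m := by
  have hbound : ∀ i : Fin (N + 3), m ≤ (i : ℕ) → (i : ℕ) ≤ N + 1 →
      k ≤ peakExtend N k m g i ∧ peakExtend N k m g i ≤ m := by
    intro i hmi hiN
    unfold peakExtend
    split_ifs
    · omega
    · have := hg.2 ⟨i - (m + 1), by omega⟩
      omega
    · omega
    · omega
  refine ⟨fun i hi => dif_pos hi, ?_, by simp [peakExtend]; omega, by simp [peakExtend]⟩
  rintro a ⟨hma, haN⟩ b ⟨hmb, hbN⟩ hab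
  rw [Fin.le_def] at hab
  by_cases ham : (a : ℕ) = m
  · exact (hbound b hmb hbN).2.trans (by simp [peakExtend, ham])
  by_cases hbN' : (b : ℕ) = N + 1
  · refine le_trans ?_ (hbound a hma haN).1
    simp [peakExtend, hbN', show ¬ N + 1 ≤ m by omega]
  have := @hg.1 ⟨a - (m + 1), by omega⟩ ⟨b - (m + 1), by omega⟩ (Fin.le_def.2 (by simp; omega))
  simp only [peakExtend, show ¬ (a : ℕ) ≤ m by omega, show ¬ (b : ℕ) ≤ m by omega,
    show (a : ℕ) ≤ N by omega, show (b : ℕ) ≤ N by omega]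
  simpa using this

lemma peakShape_eq_image (hkm : k ≤ m) (hm : m ≤ N) :
    peakShape N k m = peakExtend N k m '' boundedAntitone (N - m) (m - k) := by
  refine Set.Subset.antisymm (fun e he => ?_) (Set.image_subset_iff.2
    fun g hg => peakExtend_mem_peakShape hkm hm hg)
  have hbound : ∀ i : Fin (N + 3), m ≤ (i : ℕ) → (i : ℕ) ≤ N + 1 → k ≤ e i ∧ e i ≤ m :=
    fun i hmi hiN => apply_mem_Icc_of_mem_peakShape he hm hmi hiN
  refine ⟨fun j => e ⟨m + 1 + j, by omega⟩ - k, ⟨fun a b hab => ?_, fun j => ?_⟩, ?_⟩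
  · have := @he.2.1 ⟨m + 1 + a, by omega⟩
      (show m ≤ m + 1 + (a : ℕ) ∧ m + 1 + (a : ℕ) ≤ N + 1 by omega)
      ⟨m + 1 + b, by omega⟩ (show m ≤ m + 1 + (b : ℕ) ∧ m + 1 + (b : ℕ) ≤ N + 1 by omega)
      (Fin.le_def.2 (by simp [Fin.le_def.1 hab]))
    simp only
    omega
  · have := (hbound ⟨m + 1 + j, by omega⟩ (by simp; omega) (by simp; omega)).2
    simp only
    omega
  · funext i
    unfold peakExtend
    split_ifs with h1 h2 h3
    · exact (he.1 i h1).symm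
    · have := (hbound i (by omega) (by omega)).1
      simp only [show m + 1 + (i - (m + 1)) = (i : ℕ) by omega, Fin.eta]
      omega
    · rw [← he.2.2.1]
      exact congrArg e (Fin.ext h3.symm)
    · rw [← he.2.2.2]
      exact congrArg e (Fin.ext (by simp; omega))

lemma ncard_peakShape (hkm : k ≤ m) (hm : m ≤ N) :
    (peakShape N k m).ncard = (N - k).choose (N - m) := by
  rw [peakShape_eq_image hkm hm, Set.ncard_image_of_injective _ peakExtend_injective,
    ncard_boundedAntitone, show N - m + (m - k) = N - k by omega]

end peakExtend

lemma setOf_eq_biUnion_peakShape {N k : ℕ} (hkN : k ≤ N) :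
    {e : Fin (N + 3) → ℕ | e ∈ InvSeq0012 (N + 3) ∧ srpt e = k ∧ lastEntry e = N + 2} =
      ⋃ m ∈ Set.Icc k N, peakShape N k m := by
  refine Set.Subset.antisymm (fun e ⟨he, hs, hl⟩ => ?_)
    (Set.iUnion₂_subset fun m hm => peakShape_subset hm.1 hm.2)
  obtain ⟨m, hm, he'⟩ := exists_mem_peakShape he ((srpt_eq_iff_isLeast (by omega)).1 hs) hkN
    ((lastEntry_eq e).symm.trans hl)
  exact Set.mem_iUnion₂.2 ⟨m, hm, he'⟩

lemma sum_Icc_choose_sub {N k : ℕ} (hkN : k ≤ N) :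
    ∑ m ∈ Finset.Icc k N, (N - k).choose (N - m) = 2 ^ (N - k) := by
  rw [← Nat.sum_range_choose]
  refine Finset.sum_nbij' (N - ·) (N - ·) ?_ ?_ ?_ ?_ fun _ _ => rfl <;>
    simp only [Finset.mem_Icc, Finset.mem_range] <;> intros <;> omega

theorem stmt14_general (n k : ℕ) (hk : k + 3 ≤ n) :
    f n k (n - 1) = 2 ^ (n - 3 - k) := by
  obtain ⟨N, rfl⟩ : ∃ N, n = N + 3 := ⟨n - 3, by omega⟩
  have hkN : k ≤ N := by omega
  have hfin : ∀ m ∈ Set.Icc k N, (peakShape N k m).Finite := fun m hm =>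
    peakShape_eq_image hm.1 hm.2 ▸ (boundedAntitone_finite _ _).image _
  rw [f, show N + 3 - 1 = N + 2 from rfl, setOf_eq_biUnion_peakShape hkN,
    (Set.finite_Icc k N).ncard_biUnion hfin
      (pairwiseDisjoint_peakShape.subset Set.Icc_subset_Iic_self),
    ← Finset.coe_Icc, finsum_mem_coe_finset,
    Finset.sum_congr rfl fun m hm =>
      ncard_peakShape (Finset.mem_Icc.1 hm).1 (Finset.mem_Icc.1 hm).2,
    sum_Icc_choose_sub hkN, show N + 3 - 3 - k = N - k by omega]

/-- For `n ≥ 3` and `0 ≤ k ≤ n - 3`, `f n k (n-1) = 2^(n-3-k)`. -/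
theorem stmt14 (n k : ℕ) (hn : 3 ≤ n) (hk : k + 3 ≤ n) :
    f n k (n - 1) = 2 ^ (n - 3 - k) :=
  stmt14_general n k hk
end

section
/- For every n ≥ 2, the number of sequences e ∈ I_n(0012) with srpt(e) = last(e) = 0 equals |I_{n−1}(0012)|, the total number of inversion sequences of length n−1 avoiding the pattern 0012. (This is the coefficient form of the identity D(0;q) = q·F(1,1;q).) -/
/-- For every `n ≥ 2`, the number of `e ∈ I_n(0012)` with
`srpt e = last e = 0` equals `|I_{n-1}(0012)|`. -/
theorem stmt15 (n : ℕ) (hn : 2 ≤ n) :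
    {e : Fin n → ℕ | e ∈ InvSeq0012 n ∧ srpt e = 0 ∧ lastEntry e = 0}.ncard =
      (InvSeq0012 (n - 1)).ncard := by
  set S := {e : Fin n → ℕ | e ∈ InvSeq0012 n ∧ srpt e = 0 ∧ lastEntry e = 0} with hS
  have hinj : Set.InjOn (gammaSeq (n := n)) S := by
    intro e he e' he' hg
    funext i
    by_cases hi : i.val < n - 1
    · have := congrFun hg ⟨i.val, hi⟩
      simpa [gammaSeq, Fin.castLE] using this
    · have hlt := i.isLt
      have hi' : i = ⟨n - 1, by omega⟩ := by ext; simp; omega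
      have h1 := he.2.2
      have h2 := he'.2.2
      simp only [lastEntry, dif_pos (show 0 < n by omega)] at h1 h2
      rw [hi', h1, h2]
  have himg : gammaSeq '' S = InvSeq0012 (n - 1) := by
    ext x
    constructor
    · rintro ⟨e, ⟨⟨hinv, hav⟩, -, -⟩, rfl⟩
      refine ⟨fun i => hinv _, ?_⟩
      rintro ⟨i, j, k, l, hij, hjk, hkl, h1, h2, h3⟩
      exact hav ⟨_, _, _, _, Fin.lt_def.mpr (Fin.lt_def.mp hij),
        Fin.lt_def.mpr (Fin.lt_def.mp hjk), Fin.lt_def.mpr (Fin.lt_def.mp hkl), h1, h2, h3⟩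
    · rintro ⟨hinv, hav⟩
      refine ⟨fun i => if h : i.val < n - 1 then x ⟨i.val, h⟩ else 0, ⟨⟨?_, ?_⟩, ?_, ?_⟩, ?_⟩
      · intro i
        by_cases h : i.val < n - 1
        · simpa [h] using hinv ⟨i.val, h⟩
        · simp [h]
      · rintro ⟨i, j, k, l, hij, hjk, hkl, h1, h2, h3⟩
        by_cases hl : l.val < n - 1
        · have hi : i.val < n - 1 := by have := hij.trans (hjk.trans hkl); omega
          have hj : j.val < n - 1 := by have := hjk.trans hkl; omega
          have hk : k.val < n - 1 := by have := hkl; omega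
          simp only [dif_pos hi, dif_pos hj, dif_pos hk, dif_pos hl] at h1 h2 h3
          exact hav ⟨⟨i.val, hi⟩, ⟨j.val, hj⟩, ⟨k.val, hk⟩, ⟨l.val, hl⟩,
            hij, hjk, hkl, h1, h2, h3⟩
        · simp only [dif_neg hl] at h3
          omega
      · have hz : (0 : ℕ) ∈ repeats (fun i : Fin n =>
            if h : i.val < n - 1 then x ⟨i.val, h⟩ else 0) := by
          refine ⟨⟨0, by omega⟩, ⟨n - 1, by omega⟩, ?_, ?_, ?_⟩
          · intro h; have := congrArg Fin.val h; simp at this; omega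
          · simp only [dif_pos (show 0 < n - 1 by omega)]
            exact Nat.le_zero.mp (hinv ⟨0, by omega⟩)
          · simp
        rw [srpt, if_pos ⟨0, hz⟩]
        exact Nat.sInf_eq_zero.mpr (Or.inl hz)
      · simp [lastEntry, show 0 < n by omega]
      · funext i
        simp [gammaSeq, Fin.castLE, i.isLt]
  calc S.ncard = (gammaSeq '' S).ncard := (Set.ncard_image_of_injOn hinj).symm
    _ = (InvSeq0012 (n - 1)).ncard := by rw [himg]
end

section
/- For every n ≥ 2 and every k ≥ 1, the number of sequences e ∈ I_n(0012) with srpt(e) = k equals the number of sequences e' ∈ I_{n−1}(0012) with srpt(e') = k − 1. (This is the coefficient form, for k ≥ 1, of the identity (1−xq)·F(x,1;q) = (1−q)·F(1,1;q).) -/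
namespace Stmt16Aux

/-- Prepend `0` and shift all values up by one. -/
def Psi {m : ℕ} (e' : Fin m → ℕ) : Fin (m + 1) → ℕ :=
  Fin.cases 0 (fun i => e' i + 1)

lemma Psi_zero {m : ℕ} (e' : Fin m → ℕ) : Psi e' 0 = 0 := by simp [Psi]

lemma Psi_succ {m : ℕ} (e' : Fin m → ℕ) (i : Fin m) : Psi e' i.succ = e' i + 1 := by
  simp [Psi]

lemma Psi_injective {m : ℕ} : Function.Injective (Psi (m := m)) := by
  intro a b h
  funext i
  have := congrFun h i.succ
  rw [Psi_succ, Psi_succ] at this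
  omega

lemma sInf_image_succ {S : Set ℕ} (hS : S.Nonempty) :
    sInf ((· + 1) '' S) = sInf S + 1 := by
  have h1 : sInf S ∈ S := Nat.sInf_mem hS
  have h2 : sInf ((· + 1) '' S) ≤ sInf S + 1 := Nat.sInf_le ⟨_, h1, rfl⟩
  obtain ⟨t, ht, h4⟩ := Nat.sInf_mem (hS.image (· + 1))
  have h4' : t + 1 = sInf ((· + 1) '' S) := h4
  have h5 := Nat.sInf_le ht
  omega

lemma repeats_Psi {m : ℕ} (e' : Fin m → ℕ) :
    repeats (Psi e') = (· + 1) '' repeats e' := by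
  ext w
  constructor
  · rintro ⟨i, j, hij, hi, hj⟩
    rcases Fin.eq_zero_or_eq_succ i with rfl | ⟨i', rfl⟩
    · rcases Fin.eq_zero_or_eq_succ j with rfl | ⟨j', rfl⟩
      · exact absurd rfl hij
      · rw [Psi_zero] at hi; rw [Psi_succ] at hj; omega
    · rcases Fin.eq_zero_or_eq_succ j with rfl | ⟨j', rfl⟩
      · rw [Psi_succ] at hi; rw [Psi_zero] at hj; omega
      · rw [Psi_succ] at hi hj
        exact ⟨e' i', ⟨i', j', fun h => hij (congrArg Fin.succ h), rfl, by omega⟩,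
          show e' i' + 1 = w by omega⟩
  · rintro ⟨v, ⟨i, j, hij, hi, hj⟩, rfl⟩
    exact ⟨i.succ, j.succ, fun h => hij (Fin.succ_injective _ h),
      by rw [Psi_succ, hi], by rw [Psi_succ, hj]⟩

lemma isInvSeq_Psi {m : ℕ} (e' : Fin m → ℕ) : IsInvSeq (Psi e') ↔ IsInvSeq e' := by
  constructor
  · intro h i
    have := h i.succ
    rw [Psi_succ] at this
    simp only [Fin.val_succ] at this
    omega
  · intro h i
    rcases Fin.eq_zero_or_eq_succ i with rfl | ⟨i', rfl⟩
    · rw [Psi_zero]; simp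
    · rw [Psi_succ]
      have := h i'
      simp only [Fin.val_succ]
      omega

lemma avoids_Psi {m : ℕ} (e' : Fin m → ℕ) :
    Avoids0012 (Psi e') ↔ Avoids0012 e' := by
  apply not_congr
  constructor
  · rintro ⟨i, j, k, l, h1, h2, h3, h4, h5, h6⟩
    rcases Fin.eq_zero_or_eq_succ j with rfl | ⟨j', rfl⟩
    · exact absurd h1 (Fin.not_lt_zero i)
    rcases Fin.eq_zero_or_eq_succ k with rfl | ⟨k', rfl⟩
    · exact absurd h2 (Fin.not_lt_zero _)
    rcases Fin.eq_zero_or_eq_succ l with rfl | ⟨l', rfl⟩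
    · exact absurd h3 (Fin.not_lt_zero _)
    rcases Fin.eq_zero_or_eq_succ i with rfl | ⟨i', rfl⟩
    · rw [Psi_zero, Psi_succ] at h4; omega
    rw [Psi_succ, Psi_succ] at h4
    rw [Psi_succ, Psi_succ] at h5
    rw [Psi_succ, Psi_succ] at h6
    exact ⟨i', j', k', l', Fin.succ_lt_succ_iff.mp h1, Fin.succ_lt_succ_iff.mp h2,
      Fin.succ_lt_succ_iff.mp h3, by omega, by omega, by omega⟩
  · rintro ⟨i, j, k, l, h1, h2, h3, h4, h5, h6⟩
    refine ⟨i.succ, j.succ, k.succ, l.succ, Fin.succ_lt_succ_iff.mpr h1,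
      Fin.succ_lt_succ_iff.mpr h2, Fin.succ_lt_succ_iff.mpr h3, ?_, ?_, ?_⟩ <;>
      rw [Psi_succ, Psi_succ] <;> omega

lemma srpt_Psi {m : ℕ} (hm : 1 ≤ m) (e' : Fin m → ℕ) :
    srpt (Psi e') = srpt e' + 1 := by
  unfold srpt
  rw [repeats_Psi]
  by_cases h : (repeats e').Nonempty
  · rw [if_pos (h.image _), if_pos h, sInf_image_succ h]
  · rw [if_neg, if_neg h]
    · omega
    · rintro ⟨y, x, hx, -⟩
      exact h ⟨x, hx⟩

lemma exists_psi {m : ℕ} (e : Fin (m + 1) → ℕ) (hinv : IsInvSeq e) (j : ℕ)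
    (hs : srpt e = j + 1) : ∃ e', e = Psi e' := by
  refine ⟨fun i => e i.succ - 1, ?_⟩
  have h0 : e 0 = 0 := by have := hinv 0; simpa using this
  have h1 : ∀ i : Fin m, 1 ≤ e i.succ := by
    intro i
    by_contra h
    have h0' : e i.succ = 0 := by omega
    have hrep : (0 : ℕ) ∈ repeats e := ⟨0, i.succ, (Fin.succ_ne_zero i).symm, h0, h0'⟩
    have hne : (repeats e).Nonempty := ⟨0, hrep⟩
    have : srpt e = 0 := by
      unfold srpt
      rw [if_pos hne]
      exact Nat.le_zero.mp (Nat.sInf_le hrep)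
    omega
  funext i
  rcases Fin.eq_zero_or_eq_succ i with rfl | ⟨i', rfl⟩
  · rw [Psi_zero]; exact h0
  · rw [Psi_succ]; have := h1 i'; omega

theorem key (m j : ℕ) :
    {e : Fin (m + 2) → ℕ | e ∈ InvSeq0012 (m + 2) ∧ srpt e = j + 1}.ncard =
      {e' : Fin (m + 1) → ℕ | e' ∈ InvSeq0012 (m + 1) ∧ srpt e' = j}.ncard := by
  have hset : {e : Fin (m + 2) → ℕ | e ∈ InvSeq0012 (m + 2) ∧ srpt e = j + 1} =
      Psi '' {e' : Fin (m + 1) → ℕ | e' ∈ InvSeq0012 (m + 1) ∧ srpt e' = j} := by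
    ext e
    constructor
    · rintro ⟨⟨hinv, hav⟩, hs⟩
      obtain ⟨e', rfl⟩ := exists_psi e hinv j hs
      have hsp := srpt_Psi (m := m + 1) (by omega) e'
      exact ⟨e', ⟨⟨(isInvSeq_Psi e').mp hinv, (avoids_Psi e').mp hav⟩, by omega⟩, rfl⟩
    · rintro ⟨e', ⟨⟨hinv, hav⟩, hs⟩, rfl⟩
      exact ⟨⟨(isInvSeq_Psi e').mpr hinv, (avoids_Psi e').mpr hav⟩,
        by rw [srpt_Psi (by omega), hs]⟩
  rw [hset, Set.ncard_image_of_injective _ Psi_injective]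

end Stmt16Aux

/-- For every `n ≥ 2` and `k ≥ 1`, the number of `e ∈ I_n(0012)` with
`srpt e = k` equals the number of `e' ∈ I_{n-1}(0012)` with `srpt e' = k - 1`. -/
theorem stmt16 (n k : ℕ) (hn : 2 ≤ n) (hk : 1 ≤ k) :
    {e : Fin n → ℕ | e ∈ InvSeq0012 n ∧ srpt e = k}.ncard =
      {e : Fin (n - 1) → ℕ | e ∈ InvSeq0012 (n - 1) ∧ srpt e = k - 1}.ncard := by
  obtain ⟨m, rfl⟩ : ∃ m, n = m + 2 := ⟨n - 2, by omega⟩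
  obtain ⟨j, rfl⟩ : ∃ j, k = j + 1 := ⟨k - 1, by omega⟩
  exact Stmt16Aux.key m j
end

section
/- For every n ≥ 2, the number of sequences e ∈ I_n(0012) with srpt(e) = 0 equals |I_n(0012)| − |I_{n−1}(0012)|. (This is the coefficient form, for k = 0, of the identity (1−xq)·F(x,1;q) = (1−q)·F(1,1;q).) -/
lemma invSeq_finite (n : ℕ) : (InvSeq0012 n).Finite := by
  apply Set.Finite.subset (Set.Finite.pi (fun i : Fin n => Set.finite_Iic (i : ℕ)))
  intro e he
  simp only [Set.mem_pi, Set.mem_univ, Set.mem_Iic, forall_true_left]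
  exact fun i => he.1 i

lemma srpt_zero_iff {n : ℕ} (hn : 2 ≤ n) (e : Fin n → ℕ) (he : IsInvSeq e) :
    srpt e = 0 ↔ ∃ i : Fin n, (i : ℕ) ≠ 0 ∧ e i = 0 := by
  have h0 : e ⟨0, by omega⟩ = 0 := Nat.le_zero.mp (he ⟨0, by omega⟩)
  unfold srpt
  split_ifs with h
  · constructor
    · intro hs
      have hmem : 0 ∈ repeats e := hs ▸ Nat.sInf_mem h
      obtain ⟨i, j, hij, hi, hj⟩ := hmem
      by_cases hiz : (i : ℕ) = 0
      · refine ⟨j, ?_, hj⟩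
        intro hjz
        exact hij (Fin.ext (by omega))
      · exact ⟨i, hiz, hi⟩
    · rintro ⟨i, hiz, hi⟩
      have : 0 ∈ repeats e := ⟨i, ⟨0, by omega⟩, fun hc => hiz (by simpa using congrArg Fin.val hc), hi, h0⟩
      exact Nat.sInf_eq_zero.mpr (Or.inl this)
  · constructor
    · intro hs; omega
    · rintro ⟨i, hiz, hi⟩
      exact absurd ⟨0, i, ⟨0, by omega⟩, fun hc => hiz (by simpa using congrArg Fin.val hc), hi, h0⟩ h

def phi {n : ℕ} (g : Fin (n - 1) → ℕ) : Fin n → ℕ :=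
  fun i => if h : (i : ℕ) = 0 then 0 else g ⟨(i : ℕ) - 1, by have := i.isLt; omega⟩ + 1

lemma phi_pos {n : ℕ} (g : Fin (n - 1) → ℕ) (i : Fin n) (hi : (i : ℕ) ≠ 0) :
    phi g i = g ⟨(i : ℕ) - 1, by have := i.isLt; omega⟩ + 1 := by
  simp [phi, hi]

lemma phi_succ {n : ℕ} (g : Fin (n - 1) → ℕ) (j : Fin (n - 1)) :
    phi g ⟨(j : ℕ) + 1, by have := j.isLt; omega⟩ = g j + 1 := by
  rw [phi_pos g _ (by simp)]
  congr 1

lemma phi_inj {n : ℕ} : Function.Injective (phi (n := n)) := by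
  intro g g' hgg
  funext j
  have := congrFun hgg ⟨(j : ℕ) + 1, by have := j.isLt; omega⟩
  rw [phi_succ, phi_succ] at this
  omega

lemma phi_avoids {n : ℕ} (g : Fin (n - 1) → ℕ) :
    Avoids0012 (phi g) ↔ Avoids0012 g := by
  constructor
  · intro h hc
    obtain ⟨i, j, k, l, hij, hjk, hkl, h1, h2, h3⟩ := hc
    refine h ⟨⟨(i:ℕ)+1, by have := i.isLt; omega⟩, ⟨(j:ℕ)+1, by have := j.isLt; omega⟩,
      ⟨(k:ℕ)+1, by have := k.isLt; omega⟩, ⟨(l:ℕ)+1, by have := l.isLt; omega⟩, ?_, ?_, ?_, ?_, ?_, ?_⟩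
    · exact Fin.mk_lt_mk.mpr (by have := Fin.lt_def.mp hij; omega)
    · exact Fin.mk_lt_mk.mpr (by have := Fin.lt_def.mp hjk; omega)
    · exact Fin.mk_lt_mk.mpr (by have := Fin.lt_def.mp hkl; omega)
    · rw [phi_succ, phi_succ]; omega
    · rw [phi_succ, phi_succ]; omega
    · rw [phi_succ, phi_succ]; omega
  · intro h hc
    obtain ⟨i, j, k, l, hij, hjk, hkl, h1, h2, h3⟩ := hc
    have hij' := Fin.lt_def.mp hij
    have hjk' := Fin.lt_def.mp hjk
    have hkl' := Fin.lt_def.mp hkl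
    have hjz : (j : ℕ) ≠ 0 := by omega
    have hkz : (k : ℕ) ≠ 0 := by omega
    have hlz : (l : ℕ) ≠ 0 := by omega
    have hiz : (i : ℕ) ≠ 0 := by
      intro hiz
      rw [phi_pos g j hjz] at h1
      simp [phi, hiz] at h1
    rw [phi_pos g i hiz, phi_pos g j hjz] at h1
    rw [phi_pos g j hjz, phi_pos g k hkz] at h2
    rw [phi_pos g k hkz, phi_pos g l hlz] at h3
    refine h ⟨⟨(i:ℕ)-1, by have := i.isLt; omega⟩, ⟨(j:ℕ)-1, by have := j.isLt; omega⟩,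
      ⟨(k:ℕ)-1, by have := k.isLt; omega⟩, ⟨(l:ℕ)-1, by have := l.isLt; omega⟩,
      Fin.mk_lt_mk.mpr (by omega), Fin.mk_lt_mk.mpr (by omega), Fin.mk_lt_mk.mpr (by omega),
      by omega, by omega, by omega⟩

lemma phi_image {n : ℕ} (hn : 2 ≤ n) :
    phi '' (InvSeq0012 (n - 1)) = {e : Fin n → ℕ | e ∈ InvSeq0012 n ∧ ¬ srpt e = 0} := by
  ext e
  constructor
  · rintro ⟨g, ⟨hg1, hg2⟩, rfl⟩
    have hinv : IsInvSeq (phi g) := by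
      intro i
      by_cases hi : (i : ℕ) = 0
      · simp [phi, hi]
      · rw [phi_pos g i hi]
        have := hg1 ⟨(i:ℕ)-1, by have := i.isLt; omega⟩
        simp only at this
        omega
    refine ⟨⟨hinv, (phi_avoids g).mpr hg2⟩, ?_⟩
    rw [srpt_zero_iff hn _ hinv]
    rintro ⟨i, hiz, hi⟩
    rw [phi_pos g i hiz] at hi
    omega
  · rintro ⟨⟨hinv, hav⟩, hs⟩
    rw [srpt_zero_iff hn _ hinv] at hs
    push_neg at hs
    have hpos : ∀ i : Fin n, (i : ℕ) ≠ 0 → 1 ≤ e i := by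
      intro i hi
      have := hs i hi
      omega
    refine ⟨fun j => e ⟨(j:ℕ)+1, by have := j.isLt; omega⟩ - 1, ⟨?_, ?_⟩, ?_⟩
    · intro j
      have := hinv ⟨(j:ℕ)+1, by have := j.isLt; omega⟩
      simp only at this
      dsimp only
      omega
    · rw [← phi_avoids]
      have : phi (fun j : Fin (n-1) => e ⟨(j:ℕ)+1, by have := j.isLt; omega⟩ - 1) = e := by
        funext i
        by_cases hi : (i : ℕ) = 0
        · have h2 := hinv i
          rw [hi] at h2
          simp [phi, hi]
          omega
        · rw [phi_pos _ i hi]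
          have h1 := hpos i hi
          have heq : (⟨(i:ℕ) - 1 + 1, by have := i.isLt; omega⟩ : Fin n) = i :=
            Fin.ext (by simp only [Fin.val_mk]; omega)
          dsimp only
          rw [heq]
          omega
      rw [this]
      exact hav
    · funext i
      by_cases hi : (i : ℕ) = 0
      · have h2 := hinv i
        rw [hi] at h2
        simp [phi, hi]
        omega
      · rw [phi_pos _ i hi]
        have h1 := hpos i hi
        have heq : (⟨(i:ℕ) - 1 + 1, by have := i.isLt; omega⟩ : Fin n) = i :=
          Fin.ext (by simp only [Fin.val_mk]; omega)
        dsimp only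
        rw [heq]
        omega

/-- For every `n ≥ 2`, the number of `e ∈ I_n(0012)` with `srpt e = 0`
equals `|I_n(0012)| - |I_{n-1}(0012)|`. -/
theorem stmt17 (n : ℕ) (hn : 2 ≤ n) :
    ({e : Fin n → ℕ | e ∈ InvSeq0012 n ∧ srpt e = 0}.ncard : ℤ) =
      ((InvSeq0012 n).ncard : ℤ) - ((InvSeq0012 (n - 1)).ncard : ℤ) := by
  have hfin := invSeq_finite n
  set A := {e : Fin n → ℕ | e ∈ InvSeq0012 n ∧ srpt e = 0} with hA
  set B := {e : Fin n → ℕ | e ∈ InvSeq0012 n ∧ ¬ srpt e = 0} with hBdef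
  have hAfin : A.Finite := hfin.subset (fun e he => he.1)
  have hBfin : B.Finite := hfin.subset (fun e he => he.1)
  have hU : A ∪ B = InvSeq0012 n := by
    ext e
    simp only [hA, hBdef, Set.mem_union, Set.mem_setOf_eq]
    tauto
  have hdisj : Disjoint A B := by
    rw [Set.disjoint_left]
    rintro e ⟨_, h0⟩ ⟨_, h1⟩
    exact h1 h0
  have hB : B.ncard = (InvSeq0012 (n - 1)).ncard := by
    rw [hBdef, ← phi_image hn, Set.ncard_image_of_injective _ phi_inj]
  have hsum := Set.ncard_union_eq hdisj hAfin hBfin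
  rw [hU, hB] at hsum
  omega
end
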